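/- arXiv:math/0512196 — 6 statements merged into one kernel-verified Lean document; each statement's English description precedes it below -/
import Mathlib

section
/- If a pointed normed cone K has a sub-invariant norm, then 0 = e, and for every α∈(0,1) the neutral element e is the only element of K(α) having finite norm. -/
/-!
For `y ≠ e` we have `a • y → 𝟎` as `a ↓ 0`, so `‖a • y‖ → 0`; by sub-invariance
`edist (e + a • y) e ≤ ‖a • y‖`, so `a • y` also tends to `e`, and `𝟎 = e` by uniqueness of limits.
Sub-invariance also makes the norm subadditive, so an `α`-stable `z` satisfies
`2 ^ (1/α) ‖z‖ = ‖z + z‖ ≤ 2 ‖z‖`; for `α < 1` this forces `‖z‖ = 0`, i.e. `z = 𝟎 = e`.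
-/
open Filter Topology

section SubinvariantNorm

variable {K : Type*}

def IsStable [Add K] [SMul ℝ K] (α : ℝ) (z : K) : Prop :=
  ∀ a b : ℝ, 0 < a → 0 < b → (a ^ (1 / α)) • z + (b ^ (1 / α)) • z = ((a + b) ^ (1 / α)) • z

theorem IsStable.rpow_smul_eq_add_self [Add K] [SMul ℝ K] {α : ℝ} {z : K}
    (hz : IsStable α z) (hone_smul : ∀ x : K, (1 : ℝ) • x = x) :
    ((2 : ℝ) ^ (1 / α)) • z = z + z := by
  have h := hz 1 1 one_pos one_pos
  rw [Real.one_rpow, hone_smul, one_add_one_eq_two] at h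
  exact h.symm

variable [EMetricSpace K]

def IsSubinvariantNorm [Add K] (o : K) : Prop :=
  ∀ x h : K, edist (x + h) x ≤ edist h o

theorem IsSubinvariantNorm.tendsto_add [Add K] {o : K} (hsub : IsSubinvariantNorm o)
    {ι : Type*} {l : Filter ι} {f : ι → K} (hf : Tendsto f l (𝓝 o)) (x : K) :
    Tendsto (fun t => x + f t) l (𝓝 x) :=
  tendsto_iff_edist_tendsto_0.mpr <|
    tendsto_of_tendsto_of_tendsto_of_le_of_le tendsto_const_nhds
      (tendsto_iff_edist_tendsto_0.mp hf) (fun _ => zero_le) (fun t => hsub x (f t))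

theorem IsSubinvariantNorm.edist_add_le [Add K] {o : K} (hsub : IsSubinvariantNorm o)
    (x y : K) : edist (x + y) o ≤ edist x o + edist y o :=
  calc edist (x + y) o ≤ edist (x + y) x + edist x o := edist_triangle _ _ _
    _ ≤ edist y o + edist x o := by gcongr; exact hsub x y
    _ = edist x o + edist y o := add_comm _ _

theorem IsSubinvariantNorm.origin_eq_zero [AddZeroClass K] [SMul ℝ K] {o : K}
    (hsub : IsSubinvariantNorm o)
    (horigin : ∀ x : K, x ≠ 0 → Tendsto (fun a : ℝ => a • x) (𝓝[>] 0) (𝓝 o)) :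
    o = 0 := by
  by_contra hne
  have hto : Tendsto (fun a : ℝ => a • o) (𝓝[>] 0) (𝓝 o) := horigin o hne
  have hto_zero : Tendsto (fun a : ℝ => a • o) (𝓝[>] 0) (𝓝 0) := by
    simpa only [zero_add] using hsub.tendsto_add hto 0
  exact hne (tendsto_nhds_unique hto hto_zero)

theorem IsSubinvariantNorm.eq_origin_of_smul_eq_add_self [Add K] [SMul ℝ K] {o : K}
    (hsub : IsSubinvariantNorm o)
    (hhom : ∀ a : ℝ, 0 < a → ∀ x : K, edist (a • x) o = ENNReal.ofReal a * edist x o)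
    {c : ℝ} (hc : 2 < c) {z : K} (hcz : c • z = z + z) (hz : edist z o ≠ ⊤) : z = o := by
  have hle : ENNReal.ofReal c * edist z o ≤ 2 * edist z o :=
    calc ENNReal.ofReal c * edist z o = edist (z + z) o := by
          rw [← hhom c (by linarith), hcz]
      _ ≤ edist z o + edist z o := hsub.edist_add_le z z
      _ = 2 * edist z o := (two_mul _).symm
  have hlt : (2 : ENNReal) < ENNReal.ofReal c := by
    simpa using (ENNReal.ofReal_lt_ofReal_iff_of_nonneg zero_le_two).mpr hc
  by_contra hne
  exact hle.not_gt (ENNReal.mul_lt_mul_left (edist_pos.mpr hne).ne' hz hlt)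

theorem IsSubinvariantNorm.eq_origin_of_isStable [Add K] [SMul ℝ K] {o : K}
    (hsub : IsSubinvariantNorm o)
    (hhom : ∀ a : ℝ, 0 < a → ∀ x : K, edist (a • x) o = ENNReal.ofReal a * edist x o)
    (hone_smul : ∀ x : K, (1 : ℝ) • x = x) {α : ℝ} (hα0 : 0 < α) (hα1 : α < 1) {z : K}
    (hstable : IsStable α z) (hz : edist z o ≠ ⊤) : z = o := by
  have hc : (2 : ℝ) < 2 ^ (1 / α) := by
    simpa using Real.rpow_lt_rpow_of_exponent_lt one_lt_two ((one_lt_div hα0).mpr hα1)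
  exact hsub.eq_origin_of_smul_eq_add_self hhom hc (hstable.rpow_smul_eq_add_self hone_smul) hz

end SubinvariantNorm

/-- The Lean `0 : K` is the paper's neutral element `e`, and `o : K` is the paper's origin `𝟎`;
the norm is `‖x‖ = edist x o`. -/
theorem origin_eq_neutral_and_alphaStable_trivial_of_subinvariant_norm_general
    {K : Type*} [EMetricSpace K]
    [AddCommMonoid K] [SMul ℝ K]
    (hone_smul : ∀ x : K, (1 : ℝ) • x = x)
    (o : K)
    (horigin : ∀ x : K, x ≠ 0 →
      Tendsto (fun a : ℝ => a • x) (𝓝[>] (0 : ℝ)) (𝓝 o))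
    (hhom : ∀ a : ℝ, 0 < a → ∀ x : K, edist (a • x) o = ENNReal.ofReal a * edist x o)
    (hsub : ∀ x h : K, edist (x + h) x ≤ edist h o) :
    o = (0 : K) ∧
      ∀ α : ℝ, 0 < α → α < 1 → ∀ z : K, edist z o ≠ ⊤ →
        (∀ a b : ℝ, 0 < a → 0 < b →
          (a ^ (1 / α)) • z + (b ^ (1 / α)) • z = ((a + b) ^ (1 / α)) • z) →
        z = 0 := by
  have hsub : IsSubinvariantNorm o := hsub
  have ho : o = 0 := hsub.origin_eq_zero horigin
  refine ⟨ho, fun α hα0 hα1 z hz hstable => ?_⟩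
  rw [← ho]
  exact hsub.eq_origin_of_isStable hhom hone_smul hα0 hα1 hstable hz

/-- If a pointed normed cone `K` (a pointed convex cone whose
(extended-valued) metric is homogeneous at the origin `o`, the norm being
`‖x‖ = edist x o`) has a sub-invariant norm (`edist (x + h) x ≤ edist h o` for all
`x, h`), then the origin coincides with the neutral element, and for every
`α ∈ (0,1)` the neutral element is the only `α`-stable element with finite norm.
Here the Lean `0 : K` denotes the paper's neutral element `e`, and `o : K` denotes
the paper's origin `𝟎`. -/
theorem origin_eq_neutral_and_alphaStable_trivial_of_subinvariant_norm
    {K : Type*} [EMetricSpace K] [CompleteSpace K] [SecondCountableTopology K]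
    [AddCommMonoid K] [SMul ℝ K]
    (hadd_cont : Continuous fun p : K × K => p.1 + p.2)
    (hsmul_cont : ContinuousOn (fun p : ℝ × K => p.1 • p.2)
      (Set.Ioi (0 : ℝ) ×ˢ (Set.univ : Set K)))
    (hsmul_add : ∀ a : ℝ, 0 < a → ∀ x y : K, a • (x + y) = a • x + a • y)
    (hsmul_assoc : ∀ a b : ℝ, 0 < a → 0 < b → ∀ x : K, a • (b • x) = (a * b) • x)
    (hone_smul : ∀ x : K, (1 : ℝ) • x = x)
    (hsmul_e : ∀ a : ℝ, 0 < a → a • (0 : K) = (0 : K))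
    (o : K)
    (horigin : ∀ x : K, x ≠ 0 →
      Tendsto (fun a : ℝ => a • x) (𝓝[>] (0 : ℝ)) (𝓝 o))
    (horigin_unique : ∀ o' : K, (∀ x : K, x ≠ 0 →
      Tendsto (fun a : ℝ => a • x) (𝓝[>] (0 : ℝ)) (𝓝 o')) → o' = o)
    (hhom : ∀ a : ℝ, 0 < a → ∀ x : K, edist (a • x) o = ENNReal.ofReal a * edist x o)
    (hsub : ∀ x h : K, edist (x + h) x ≤ edist h o) :
    o = (0 : K) ∧
      ∀ α : ℝ, 0 < α → α < 1 → ∀ z : K, edist z o ≠ ⊤ →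
        (∀ a b : ℝ, 0 < a → 0 < b →
          (a ^ (1 / α)) • z + (b ^ (1 / α)) • z = ((a + b) ^ (1 / α)) • z) →
        z = 0 :=
  origin_eq_neutral_and_alphaStable_trivial_of_subinvariant_norm_general hone_smul o horigin hhom
    hsub
end

section
/- A convex cone K with a metric d can be isometrically embedded into a Banach space — i.e. there exist a Banach space B and an injection I: K → B such that I(a·x + b·y) = a·I(x) + b·I(y) for all a,b>0 and x,y∈K, and d(x,y) = ‖I(x) − I(y)‖ for all x,y∈K — if and only if the second distributivity law holds and d is homogeneous (d(a·x, a·y) = a·d(x,y) for all a>0, x,y∈K) and invariant (d(x+z, y+z) = d(x,y) for all x,y,z∈K). -/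
/-!
Invariance of the metric makes `K` cancellative, so `K` embeds into its Grothendieck group
`G = K - K`. Multiplication by a positive real extends to `G` by the universal property, and the
second distributivity law makes `c ↦ (c • ·)` additive on positive reals; writing every real as a
difference of two positive ones then turns `G` into a real vector space. Invariance makes
`‖x - y‖ := dist x y` well defined and homogeneity of the metric makes it a norm, so the completion
of `G` is the Banach space. Conversely, the three laws are read off from the embedding.
-/

universe u

section ExtendPos

variable {R : Type*} [Ring R] {f : ℝ → R}

theorem exists_pos_sub_pos (a : ℝ) : ∃ p q : ℝ, 0 < p ∧ 0 < q ∧ a = p - q :=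
  ⟨|a| + 1 + a, |a| + 1, by linarith [neg_abs_le a], by positivity, by ring⟩

variable (f) in
/-- Any splitting `a = p - q` with `p, q > 0` gives the same value (`extendPos_sub`);
this one is `a = (|a| + 1 + a) - (|a| + 1)`. -/
noncomputable def extendPos (a : ℝ) : R := f (|a| + 1 + a) - f (|a| + 1)

theorem extendPos_sub (hadd : ∀ a b, 0 < a → 0 < b → f (a + b) = f a + f b)
    {p q : ℝ} (hp : 0 < p) (hq : 0 < q) : extendPos f (p - q) = f p - f q := by
  have hr : 0 < |p - q| + 1 := by positivity
  have hl : 0 < |p - q| + 1 + (p - q) := by linarith [neg_abs_le (p - q)]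
  rw [extendPos, sub_eq_sub_iff_add_eq_add, ← hadd _ _ hl hq, ← hadd _ _ hp hr]
  ring_nf

theorem extendPos_of_pos (hadd : ∀ a b, 0 < a → 0 < b → f (a + b) = f a + f b) {c : ℝ}
    (hc : 0 < c) : extendPos f c = f c := by
  rw [← add_sub_cancel_right c (1 : ℝ), extendPos_sub hadd (by linarith) one_pos,
    hadd _ _ hc one_pos, add_sub_cancel_right, add_sub_cancel_right]

noncomputable def extendPosRingHom (hadd : ∀ a b, 0 < a → 0 < b → f (a + b) = f a + f b)
    (hmul : ∀ a b, 0 < a → 0 < b → f (a * b) = f a * f b) (hone : f 1 = 1) : ℝ →+* R where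
  toFun := extendPos f
  map_one' := by rw [extendPos_of_pos hadd one_pos, hone]
  map_zero' := by rw [← sub_self 1, extendPos_sub hadd one_pos one_pos, sub_self]
  map_add' a b := by
    obtain ⟨p, q, hp, hq, rfl⟩ := exists_pos_sub_pos a
    obtain ⟨p', q', hp', hq', rfl⟩ := exists_pos_sub_pos b
    rw [show p - q + (p' - q') = (p + p') - (q + q') by ring,
      extendPos_sub hadd (add_pos hp hp') (add_pos hq hq'), extendPos_sub hadd hp hq,
      extendPos_sub hadd hp' hq', hadd _ _ hp hp', hadd _ _ hq hq']
    abel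
  map_mul' a b := by
    obtain ⟨p, q, hp, hq, rfl⟩ := exists_pos_sub_pos a
    obtain ⟨p', q', hp', hq', rfl⟩ := exists_pos_sub_pos b
    rw [show (p - q) * (p' - q') = (p * p' + q * q') - (p * q' + q * p') by ring,
      extendPos_sub hadd (by positivity) (by positivity), extendPos_sub hadd hp hq,
      extendPos_sub hadd hp' hq', hadd _ _ (mul_pos hp hp') (mul_pos hq hq'),
      hadd _ _ (mul_pos hp hq') (mul_pos hq hp'), hmul _ _ hp hp', hmul _ _ hq hq',
      hmul _ _ hp hq', hmul _ _ hq hp']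
    noncomm_ring

end ExtendPos

namespace Algebra.GrothendieckAddGroup

variable {M : Type*} [AddCommMonoid M]

theorem mk_eq_of_sub_of (x : M) (s : (⊤ : AddSubmonoid M)) :
    AddLocalization.mk x s = of x - of (s : M) := by
  rw [eq_sub_iff_add_eq, AddLocalization.mk_eq_addMonoidOf_mk'_apply]
  exact (AddLocalization.addMonoidOf _).mk'_spec _ _

variable {G : Type*} [AddCommGroup G]

theorem lift_of (f : M →+ G) (x : M) : lift f (of x) = f x :=
  DFunLike.congr_fun (lift.symm_apply_apply f) x

theorem addMonoidHom_ext {j k : GrothendieckAddGroup M →+ G} (h : ∀ x, j (of x) = k (of x)) :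
    j = k :=
  (AddLocalization.addMonoidOf ⊤).epic_of_localizationMap (AddMonoidHom.ext h)

theorem addMonoidEnd_ext {j k : AddMonoid.End (GrothendieckAddGroup M)}
    (h : ∀ x, j (of x) = k (of x)) : j = k :=
  addMonoidHom_ext h

@[elab_as_elim]
theorem induction_on_sub {p : GrothendieckAddGroup M → Prop} (g : GrothendieckAddGroup M)
    (h : ∀ x y : M, p (of x - of y)) : p g := by
  induction g using AddLocalization.ind with
  | H y => exact mk_eq_of_sub_of y.1 y.2 ▸ h y.1 y.2

end Algebra.GrothendieckAddGroup

open Algebra (GrothendieckAddGroup)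
open Algebra.GrothendieckAddGroup (of)

class IsDistribCone (K : Type*) [AddCommMonoid K] [SMul ℝ K] : Prop where
  smul_add_of_pos : ∀ a : ℝ, 0 < a → ∀ x y : K, a • (x + y) = a • x + a • y
  smul_smul_of_pos : ∀ a b : ℝ, 0 < a → 0 < b → ∀ x : K, a • b • x = (a * b) • x
  one_smul : ∀ x : K, (1 : ℝ) • x = x
  smul_zero_of_pos : ∀ a : ℝ, 0 < a → a • (0 : K) = 0
  add_smul_of_pos : ∀ a b : ℝ, 0 < a → 0 < b → ∀ x : K, (a + b) • x = a • x + b • x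

namespace IsDistribCone

variable {K : Type*} [AddCommMonoid K] [SMul ℝ K] [IsDistribCone K]

def smulAddHom (c : ℝ) (hc : 0 < c) : K →+ K where
  toFun x := c • x
  map_zero' := smul_zero_of_pos c hc
  map_add' := smul_add_of_pos c hc

noncomputable def smulEnd (c : ℝ) : AddMonoid.End (GrothendieckAddGroup K) :=
  if hc : 0 < c then GrothendieckAddGroup.lift (of.comp (smulAddHom c hc)) else 0

theorem smulEnd_of {c : ℝ} (hc : 0 < c) (x : K) : smulEnd c (of x) = of (c • x) := by
  simp only [smulEnd, hc, ↓reduceDIte]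
  exact GrothendieckAddGroup.lift_of (of.comp (smulAddHom c hc)) x

theorem smulEnd_add {a b : ℝ} (ha : 0 < a) (hb : 0 < b) :
    (smulEnd (a + b) : AddMonoid.End (GrothendieckAddGroup K)) = smulEnd a + smulEnd b :=
  GrothendieckAddGroup.addMonoidEnd_ext fun x => by
    change _ = smulEnd a (of x) + smulEnd b (of x)
    rw [smulEnd_of ha, smulEnd_of hb, smulEnd_of (add_pos ha hb), add_smul_of_pos a b ha hb,
      map_add]

theorem smulEnd_mul {a b : ℝ} (ha : 0 < a) (hb : 0 < b) :
    (smulEnd (a * b) : AddMonoid.End (GrothendieckAddGroup K)) = smulEnd a * smulEnd b :=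
  GrothendieckAddGroup.addMonoidEnd_ext fun x => by
    change _ = smulEnd a (smulEnd b (of x))
    rw [smulEnd_of hb, smulEnd_of ha, smulEnd_of (mul_pos ha hb), smul_smul_of_pos a b ha hb]

theorem smulEnd_one : (smulEnd 1 : AddMonoid.End (GrothendieckAddGroup K)) = 1 :=
  GrothendieckAddGroup.addMonoidEnd_ext fun x => by
    rw [smulEnd_of one_pos, one_smul, AddMonoid.End.one_apply]

noncomputable instance : Module ℝ (GrothendieckAddGroup K) :=
  Module.compHom _ (extendPosRingHom (fun _ _ => smulEnd_add (K := K)) (fun _ _ => smulEnd_mul)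
    smulEnd_one)

theorem smul_of {c : ℝ} (hc : 0 < c) (x : K) : c • of x = of (c • x) := by
  change extendPos smulEnd c (of x) = _
  rw [extendPos_of_pos (fun _ _ => smulEnd_add) hc, smulEnd_of hc]

end IsDistribCone

section InvariantDist

variable {K : Type*} [MetricSpace K] [AddCommMonoid K]

theorem isCancelAdd_of_dist_add_right (hd : ∀ x y z : K, dist (x + z) (y + z) = dist x y) :
    IsCancelAdd K :=
  haveI : IsRightCancelAdd K := ⟨fun z x y hxy => dist_eq_zero.mp <| by
    rw [← hd x y z, show x + z = y + z from hxy, dist_self]⟩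
  AddCommMagma.IsRightCancelAdd.toIsCancelAdd K

theorem dist_eq_dist_of_add_eq_add (hd : ∀ x y z : K, dist (x + z) (y + z) = dist x y)
    {x y x' y' : K} (h : x + y' = x' + y) : dist x y = dist x' y' := by
  rw [← hd x y y', h, add_comm y y', hd]

noncomputable def invariantDistNorm (hd : ∀ x y z : K, dist (x + z) (y + z) = dist x y)
    (g : GrothendieckAddGroup K) : ℝ :=
  AddLocalization.liftOn g (fun x s => dist x (s : K)) fun {a c b d} h => by
    have := isCancelAdd_of_dist_add_right hd
    rw [← AddLocalization.mk_eq_mk_iff, AddLocalization.mk_eq_mk_iff'] at h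
    exact dist_eq_dist_of_add_eq_add hd (by rw [add_comm, h, add_comm])

variable (hd : ∀ x y z : K, dist (x + z) (y + z) = dist x y)

theorem invariantDistNorm_of_sub_of (x y : K) : invariantDistNorm hd (of x - of y) = dist x y := by
  rw [← GrothendieckAddGroup.mk_eq_of_sub_of x ⟨y, trivial⟩]
  rfl

noncomputable def invariantDistAddGroupNorm : AddGroupNorm (GrothendieckAddGroup K) where
  toFun := invariantDistNorm hd
  map_zero' := by rw [← sub_self (of (0 : K)), invariantDistNorm_of_sub_of, dist_self]
  add_le' g g' := by
    induction g using GrothendieckAddGroup.induction_on_sub with | h x y =>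
    induction g' using GrothendieckAddGroup.induction_on_sub with | h x' y' =>
    rw [show of x - of y + (of x' - of y') = of (x + x') - of (y + y') by
      rw [map_add, map_add]; abel]
    simp only [invariantDistNorm_of_sub_of]
    calc dist (x + x') (y + y') ≤ dist (x + x') (y + x') + dist (y + x') (y + y') :=
          dist_triangle _ _ _
      _ = dist x y + dist x' y' := by rw [hd, add_comm y x', add_comm y y', hd]
  neg' g := by
    induction g using GrothendieckAddGroup.induction_on_sub with | h x y =>
    rw [neg_sub, invariantDistNorm_of_sub_of, invariantDistNorm_of_sub_of, dist_comm]
  eq_zero_of_map_eq_zero' g := by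
    induction g using GrothendieckAddGroup.induction_on_sub with | h x y =>
    intro hxy
    rw [invariantDistNorm_of_sub_of, dist_eq_zero] at hxy
    rw [hxy, sub_self]

theorem invariantDistAddGroupNorm_of_sub_of (x y : K) :
    invariantDistAddGroupNorm hd (of x - of y) = dist x y :=
  invariantDistNorm_of_sub_of hd x y

variable [SMul ℝ K] [IsDistribCone K]

theorem invariantDistAddGroupNorm_smul_of_pos
    (hh : ∀ a : ℝ, 0 < a → ∀ x y : K, dist (a • x) (a • y) = a * dist x y) {c : ℝ} (hc : 0 < c)
    (g : GrothendieckAddGroup K) :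
    invariantDistAddGroupNorm hd (c • g) = c * invariantDistAddGroupNorm hd g := by
  induction g using GrothendieckAddGroup.induction_on_sub with | h x y =>
  rw [smul_sub, IsDistribCone.smul_of hc, IsDistribCone.smul_of hc,
    invariantDistAddGroupNorm_of_sub_of, invariantDistAddGroupNorm_of_sub_of, hh c hc]

theorem invariantDistAddGroupNorm_smul
    (hh : ∀ a : ℝ, 0 < a → ∀ x y : K, dist (a • x) (a • y) = a * dist x y) (c : ℝ)
    (g : GrothendieckAddGroup K) :
    invariantDistAddGroupNorm hd (c • g) = |c| * invariantDistAddGroupNorm hd g := by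
  rcases lt_trichotomy c 0 with hc | rfl | hc
  · have h := invariantDistAddGroupNorm_smul_of_pos hd hh (neg_pos.mpr hc) g
    rwa [neg_smul, map_neg_eq_map, ← abs_of_neg hc] at h
  · rw [zero_smul, map_zero, abs_zero, zero_mul]
  · rw [abs_of_pos hc, invariantDistAddGroupNorm_smul_of_pos hd hh hc]

end InvariantDist

theorem exists_banach_embedding {K : Type u} [MetricSpace K] [AddCommMonoid K] [SMul ℝ K]
    [IsDistribCone K] (hd : ∀ x y z : K, dist (x + z) (y + z) = dist x y)
    (hh : ∀ a : ℝ, 0 < a → ∀ x y : K, dist (a • x) (a • y) = a * dist x y) :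
    ∃ (B : Type u) (_ : NormedAddCommGroup B) (_ : NormedSpace ℝ B) (_ : CompleteSpace B)
      (I : K → B), Function.Injective I ∧
        (∀ a b : ℝ, 0 < a → 0 < b → ∀ x y : K, I (a • x + b • y) = a • I x + b • I y) ∧
        (∀ x y : K, dist x y = ‖I x - I y‖) := by
  let _ : NormedAddCommGroup (GrothendieckAddGroup K) :=
    (invariantDistAddGroupNorm hd).toNormedAddCommGroup
  let _ : NormedSpace ℝ (GrothendieckAddGroup K) :=
    ⟨fun c g => (invariantDistAddGroupNorm_smul hd hh c g).le⟩
  have _ := isCancelAdd_of_dist_add_right hd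
  let J := UniformSpace.Completion.toComplₗᵢ (𝕜 := ℝ) (E := GrothendieckAddGroup K)
  refine ⟨_, inferInstance, inferInstance, inferInstance, fun x => J (of x),
    J.injective.comp GrothendieckAddGroup.of_injective, fun a b ha hb x y => ?_, fun x y => ?_⟩
  · beta_reduce
    rw [map_add, ← IsDistribCone.smul_of ha, ← IsDistribCone.smul_of hb, map_add, map_smul,
      map_smul]
  · beta_reduce
    rw [← map_sub, J.norm_map]
    exact (invariantDistAddGroupNorm_of_sub_of hd x y).symm


section PosLinear

variable {K B : Type*} [AddCommMonoid K] [SMul ℝ K] [AddCommGroup B] [Module ℝ B] {I : K → B}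

theorem map_add_of_map_smul_add_smul (hone : ∀ x : K, (1 : ℝ) • x = x)
    (hI : ∀ a b : ℝ, 0 < a → 0 < b → ∀ x y : K, I (a • x + b • y) = a • I x + b • I y)
    (x y : K) : I (x + y) = I x + I y := by
  simpa only [hone, one_smul] using hI 1 1 one_pos one_pos x y

theorem map_smul_of_map_smul_add_smul (hone : ∀ x : K, (1 : ℝ) • x = x)
    (hI : ∀ a b : ℝ, 0 < a → 0 < b → ∀ x y : K, I (a • x + b • y) = a • I x + b • I y)
    {a : ℝ} (ha : 0 < a) (x : K) : I (a • x) = a • I x := by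
  have h0 : I 0 = 0 := by simpa using map_add_of_map_smul_add_smul hone hI 0 0
  simpa only [hone, add_zero, h0, smul_zero] using hI a 1 ha one_pos x 0

end PosLinear

theorem embeddable_into_banach_iff_general
    {K : Type u} [MetricSpace K] [AddCommMonoid K] [SMul ℝ K]
    (hsmul_add : ∀ a : ℝ, 0 < a → ∀ x y : K, a • (x + y) = a • x + a • y)
    (hsmul_assoc : ∀ a b : ℝ, 0 < a → 0 < b → ∀ x : K, a • (b • x) = (a * b) • x)
    (hone_smul : ∀ x : K, (1 : ℝ) • x = x)
    (hsmul_e : ∀ a : ℝ, 0 < a → a • (0 : K) = (0 : K)) :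
    (∃ (B : Type u) (_ : NormedAddCommGroup B) (_ : NormedSpace ℝ B)
        (_ : CompleteSpace B) (I : K → B),
        Function.Injective I ∧
        (∀ a b : ℝ, 0 < a → 0 < b → ∀ x y : K,
          I (a • x + b • y) = a • I x + b • I y) ∧
        (∀ x y : K, dist x y = ‖I x - I y‖)) ↔
      ((∀ a b : ℝ, 0 < a → 0 < b → ∀ x : K, (a + b) • x = a • x + b • x) ∧
       (∀ a : ℝ, 0 < a → ∀ x y : K, dist (a • x) (a • y) = a * dist x y) ∧
       (∀ x y z : K, dist (x + z) (y + z) = dist x y)) := by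
  constructor
  · rintro ⟨B, _, _, _, I, hinj, hlin, hdist⟩
    have hadd := map_add_of_map_smul_add_smul hone_smul hlin
    have hsmul {a : ℝ} (ha : 0 < a) := map_smul_of_map_smul_add_smul hone_smul hlin ha
    refine ⟨fun a b ha hb x => hinj ?_, fun a ha x y => ?_, fun x y z => ?_⟩
    · rw [hadd, hsmul (add_pos ha hb), hsmul ha, hsmul hb, add_smul]
    · rw [hdist, hdist, hsmul ha, hsmul ha, ← smul_sub, norm_smul, Real.norm_of_nonneg ha.le]
    · rw [hdist, hdist, hadd, hadd, add_sub_add_right_eq_sub]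
  · rintro ⟨hadd_smul, hdist_smul, hdist_add⟩
    have : IsDistribCone K := ⟨hsmul_add, hsmul_assoc, hone_smul, hsmul_e, hadd_smul⟩
    exact exists_banach_embedding hdist_add hdist_smul

/-- A convex cone `K` with metric `d` can be isometrically embedded into
a Banach space (via an injection `I` with `I (a•x + b•y) = a•I x + b•I y` for `a,b>0`
and `dist x y = ‖I x − I y‖`) if and only if the second distributivity law holds and
the metric is homogeneous (`dist (a•x) (a•y) = a * dist x y` for `a>0`) and invariant
(`dist (x+z) (y+z) = dist x y`). -/
theorem embeddable_into_banach_iff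
    {K : Type u} [MetricSpace K] [PolishSpace K] [AddCommMonoid K] [SMul ℝ K]
    (hadd_cont : Continuous fun p : K × K => p.1 + p.2)
    (hsmul_cont : ContinuousOn (fun p : ℝ × K => p.1 • p.2)
      (Set.Ioi (0 : ℝ) ×ˢ (Set.univ : Set K)))
    (hsmul_add : ∀ a : ℝ, 0 < a → ∀ x y : K, a • (x + y) = a • x + a • y)
    (hsmul_assoc : ∀ a b : ℝ, 0 < a → 0 < b → ∀ x : K, a • (b • x) = (a * b) • x)
    (hone_smul : ∀ x : K, (1 : ℝ) • x = x)
    (hsmul_e : ∀ a : ℝ, 0 < a → a • (0 : K) = (0 : K)) :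
    (∃ (B : Type u) (_ : NormedAddCommGroup B) (_ : NormedSpace ℝ B)
        (_ : CompleteSpace B) (I : K → B),
        Function.Injective I ∧
        (∀ a b : ℝ, 0 < a → 0 < b → ∀ x y : K,
          I (a • x + b • y) = a • I x + b • I y) ∧
        (∀ x y : K, dist x y = ‖I x - I y‖)) ↔
      ((∀ a b : ℝ, 0 < a → 0 < b → ∀ x : K, (a + b) • x = a • x + b • x) ∧
       (∀ a : ℝ, 0 < a → ∀ x y : K, dist (a • x) (a • y) = a * dist x y) ∧
       (∀ x y z : K, dist (x + z) (y + z) = dist x y)) :=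
  embeddable_into_banach_iff_general hsmul_add hsmul_assoc hone_smul hsmul_e
end

section
/- Let K be a normed cone whose norm is sub-invariant and let α∈(0,1). Let Γ_k be the partial sums of i.i.d. mean-1 exponential random variables and ε_k i.i.d. random elements on the unit sphere S of K independent of (Γ_k). Then the partial sums S_n = ∑_{k=1}^{n} Γ_k^{−1/α}·ε_k converge almost surely in K, and the series converges absolutely: ∑_{k≥1} ‖Γ_k^{−1/α}·ε_k‖ < ∞ almost surely. -/
/-!
Since `‖a • x‖ = a ‖x‖` for `a > 0` and `‖εₖ‖ = 1`, the terms have norms `Γₖ^{-1/α}`. The strong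
law of large numbers, applied to the bounded variables `min ζᵢ 1`, shows that almost surely
`Γₖ ≥ c k` for some `c > 0` and all large `k`, so `∑ Γₖ^{-1/α}` converges because `1/α > 1`.
Sub-invariance gives `d(Sₙ₊₁, Sₙ) ≤ ‖Γₙ^{-1/α} • εₙ‖`, so the partial sums are Cauchy, and they
converge since `K` is complete.
-/

open Filter Topology MeasureTheory ProbabilityTheory

theorem cauchySeq_sum_range_of_tsum_edist_ne_top {K : Type*} [PseudoEMetricSpace K]
    [AddCommMonoid K] {o : K} (hsub : ∀ x h : K, edist (x + h) x ≤ edist h o) {x : ℕ → K}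
    (hx : ∑' k, edist (x k) o ≠ ⊤) :
    CauchySeq fun n => ∑ k ∈ Finset.range n, x k :=
  cauchySeq_of_edist_le_of_tsum_ne_top _
    (fun n => by rw [edist_comm, Finset.sum_range_succ]; exact hsub _ _) hx

theorem eventually_mul_le_of_tendsto_div {s : ℕ → ℝ} {m c : ℝ}
    (hs : Tendsto (fun n => s n / n) atTop (𝓝 m)) (hcm : c < m) :
    ∀ᶠ n : ℕ in atTop, c * n ≤ s n := by
  filter_upwards [hs.eventually (eventually_gt_nhds hcm), eventually_gt_atTop 0] with n hn hn0
  exact ((lt_div_iff₀ (Nat.cast_pos.2 hn0)).1 hn).le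

theorem summable_rpow_neg_of_eventually_mul_le {s : ℕ → ℝ} {c p : ℝ} (hc : 0 < c)
    (hp : 1 < p) (hs : ∀ᶠ n : ℕ in atTop, c * n ≤ s n) :
    Summable fun n => s n ^ (-p) := by
  have hcomp : Summable fun n : ℕ => c ^ (-p) * (n : ℝ) ^ (-p) :=
    (Real.summable_nat_rpow.2 (by linarith)).mul_left _
  refine hcomp.of_norm_bounded_eventually_nat ?_
  filter_upwards [hs, eventually_gt_atTop 0] with n hn hn0
  have hcn : 0 < c * n := mul_pos hc (Nat.cast_pos.2 hn0)
  rw [Real.norm_of_nonneg (Real.rpow_nonneg (hcn.trans_le hn).le _),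
    ← Real.mul_rpow hc.le n.cast_nonneg]
  exact Real.rpow_le_rpow_of_nonpos hcn hn (by linarith)

theorem ae_exists_pos_eventually_mul_le_sum {Ω : Type*} [MeasurableSpace Ω] {μ : Measure Ω}
    [IsProbabilityMeasure μ] {ζ : ℕ → Ω → ℝ} (hindep : Pairwise (Function.onFun (IndepFun · · μ) ζ))
    (hident : ∀ k, IdentDistrib (ζ k) (ζ 0) μ μ) (hpos : ∀ k, ∀ᵐ ω ∂μ, 0 < ζ k ω) :
    ∀ᵐ ω ∂μ, ∃ c > 0, ∀ᶠ n : ℕ in atTop, c * n ≤ ∑ i ∈ Finset.range n, ζ i ω := by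
  -- truncating makes the summands integrable without changing positivity
  set q : ℝ → ℝ := fun x => min x 1
  have hq : Measurable q := measurable_id.min measurable_const
  have hq_pos : ∀ᵐ ω ∂μ, 0 < q (ζ 0 ω) := (hpos 0).mono fun ω hω => lt_min hω one_pos
  have hint : Integrable (q ∘ ζ 0) μ :=
    (integrable_const (1 : ℝ)).mono'
      (hq.comp_aemeasurable (hident 0).aemeasurable_fst).aestronglyMeasurable
      (hq_pos.mono fun ω hω => (Real.norm_of_nonneg hω.le).trans_le (min_le_right _ _))
  have hmean : 0 < μ[q ∘ ζ 0] := by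
    rw [integral_pos_iff_support_of_nonneg_ae (f := q ∘ ζ 0) (hq_pos.mono fun ω hω => hω.le)
      hint, pos_iff_ne_zero]
    intro hnull
    obtain ⟨ω, hω, hω0⟩ := (hq_pos.and (measure_eq_zero_iff_ae_notMem.1 hnull)).exists
    exact hω0 hω.ne'
  have hslln := strong_law_ae_real (fun k => q ∘ ζ k) hint
    (fun i j hij => (hindep hij).comp hq hq) (fun k => (hident k).comp hq)
  filter_upwards [hslln] with ω hω
  refine ⟨_, half_pos hmean, (eventually_mul_le_of_tendsto_div hω (half_lt_self hmean)).mono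
    fun n hn => hn.trans (Finset.sum_le_sum fun i _ => min_le_left _ _)⟩

theorem identDistrib_of_measure_le_eq {Ω : Type*} [MeasurableSpace Ω] {μ : Measure Ω}
    [IsFiniteMeasure μ] {X Y : Ω → ℝ} (hX : Measurable X) (hY : Measurable Y)
    (h : ∀ t, μ {ω | X ω ≤ t} = μ {ω | Y ω ≤ t}) : IdentDistrib X Y μ μ where
  aemeasurable_fst := hX.aemeasurable
  aemeasurable_snd := hY.aemeasurable
  map_eq := Measure.ext_of_Iic _ _ fun t => by
    rw [Measure.map_apply hX measurableSet_Iic, Measure.map_apply hY measurableSet_Iic]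
    exact h t

-- `0 : K` is the neutral element `e` of the paper, `o` its origin, and `‖x‖ = edist x o`.
theorem lepage_series_converges_of_subinvariant_norm_general
    {K : Type*} [EMetricSpace K] [CompleteSpace K]
    [AddCommMonoid K] [SMul ℝ K]
    (o : K)
    (hhom : ∀ a : ℝ, 0 < a → ∀ x : K, edist (a • x) o = ENNReal.ofReal a * edist x o)
    (hsub : ∀ x h : K, edist (x + h) x ≤ edist h o)
    (α : ℝ) (hα0 : 0 < α) (hα1 : α < 1)
    {Ω : Type*} [MeasurableSpace Ω] (μ : Measure Ω) [IsProbabilityMeasure μ]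
    (ζ : ℕ → Ω → ℝ) (hζmeas : ∀ k, Measurable (ζ k))
    (hζindep : iIndepFun ζ μ)
    (hζexp : ∀ k, ∀ t : ℝ, μ {ω | ζ k ω ≤ t} = ENNReal.ofReal (1 - Real.exp (-t)))
    (ε : ℕ → Ω → K)
    (hεsphere : ∀ k ω, edist (ε k ω) o = 1) :
    ∀ᵐ ω ∂μ,
      (∃ L : K, Tendsto (fun n : ℕ => ∑ k ∈ Finset.range n,
          ((∑ i ∈ Finset.range (k + 1), ζ i ω) ^ (-(1 / α))) • ε k ω)
        atTop (𝓝 L)) ∧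
      (∑' k : ℕ,
          edist (((∑ i ∈ Finset.range (k + 1), ζ i ω) ^ (-(1 / α))) • ε k ω) o) ≠ ⊤ := by
  have hpos (k : ℕ) : ∀ᵐ ω ∂μ, 0 < ζ k ω := by
    simpa [ae_iff] using hζexp k 0
  have hident (k : ℕ) : IdentDistrib (ζ k) (ζ 0) μ μ :=
    identDistrib_of_measure_le_eq (hζmeas k) (hζmeas 0) fun t => by rw [hζexp, hζexp]
  filter_upwards [ae_exists_pos_eventually_mul_le_sum (fun i j hij => hζindep.indepFun hij)
    hident hpos, ae_all_iff.2 hpos] with ω ⟨c, hc, hlin⟩ hωpos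
  set Γ : ℕ → ℝ := fun n => ∑ i ∈ Finset.range n, ζ i ω
  have hΓpos (k : ℕ) : 0 < Γ (k + 1) :=
    Finset.sum_pos (fun i _ => hωpos i) Finset.nonempty_range_add_one
  have hsum : Summable fun k => Γ (k + 1) ^ (-(1 / α)) :=
    (summable_nat_add_iff 1).2 <| summable_rpow_neg_of_eventually_mul_le hc
      ((one_lt_div hα0).2 hα1) hlin
  have hnorm (k : ℕ) : edist (Γ (k + 1) ^ (-(1 / α)) • ε k ω) o
      = ENNReal.ofReal (Γ (k + 1) ^ (-(1 / α))) := by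
    rw [hhom _ (Real.rpow_pos_of_pos (hΓpos k) _), hεsphere, mul_one]
  have hfin := (tsum_congr hnorm).trans_ne hsum.tsum_ofReal_ne_top
  exact ⟨cauchySeq_tendsto_of_complete (cauchySeq_sum_range_of_tsum_edist_ne_top hsub hfin), hfin⟩

/-- Let `K` be a normed cone (pointed convex cone with extended metric
homogeneous at the origin `o`, the norm being `‖x‖ = edist x o`) whose norm is
sub-invariant, and let `α ∈ (0,1)`.  Let `Γ_k` be the partial sums of i.i.d. mean-1
exponential random variables `ζ_k`, and let `ε_k` be i.i.d. random elements on the unit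
sphere `S = {x : edist x o = 1}` of `K`, independent of the sequence `(ζ_k)`.  Then the
partial sums `S_n = ∑_{k=1}^n Γ_k^{-1/α} • ε_k` converge almost surely in `K`, and the
series converges absolutely: `∑_{k≥1} ‖Γ_k^{-1/α} • ε_k‖ < ∞` almost surely.
Here the Lean `0 : K` is the paper's neutral element `e` and `o : K` the origin. -/
theorem lepage_series_converges_of_subinvariant_norm
    {K : Type*} [EMetricSpace K] [CompleteSpace K] [SecondCountableTopology K]
    [AddCommMonoid K] [SMul ℝ K] [MeasurableSpace K] [BorelSpace K]
    (hadd_cont : Continuous fun p : K × K => p.1 + p.2)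
    (hsmul_cont : ContinuousOn (fun p : ℝ × K => p.1 • p.2)
      (Set.Ioi (0 : ℝ) ×ˢ (Set.univ : Set K)))
    (hsmul_add : ∀ a : ℝ, 0 < a → ∀ x y : K, a • (x + y) = a • x + a • y)
    (hsmul_assoc : ∀ a b : ℝ, 0 < a → 0 < b → ∀ x : K, a • (b • x) = (a * b) • x)
    (hone_smul : ∀ x : K, (1 : ℝ) • x = x)
    (hsmul_e : ∀ a : ℝ, 0 < a → a • (0 : K) = (0 : K))
    (o : K)
    (horigin : ∀ x : K, x ≠ 0 →
      Tendsto (fun a : ℝ => a • x) (𝓝[>] (0 : ℝ)) (𝓝 o))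
    (hhom : ∀ a : ℝ, 0 < a → ∀ x : K, edist (a • x) o = ENNReal.ofReal a * edist x o)
    (hsub : ∀ x h : K, edist (x + h) x ≤ edist h o)
    (α : ℝ) (hα0 : 0 < α) (hα1 : α < 1)
    {Ω : Type*} [MeasurableSpace Ω] (μ : Measure Ω) [IsProbabilityMeasure μ]
    (ζ : ℕ → Ω → ℝ) (hζmeas : ∀ k, Measurable (ζ k))
    (hζindep : iIndepFun ζ μ)
    (hζexp : ∀ k, ∀ t : ℝ, μ {ω | ζ k ω ≤ t} = ENNReal.ofReal (1 - Real.exp (-t)))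
    (ε : ℕ → Ω → K) (hεmeas : ∀ k, Measurable (ε k))
    (hεsphere : ∀ k ω, edist (ε k ω) o = 1)
    (hεid : ∀ k, μ.map (ε k) = μ.map (ε 0))
    (hεindep : iIndepFun ε μ)
    (hζε : IndepFun (fun ω => fun k => ζ k ω) (fun ω => fun k => ε k ω) μ) :
    ∀ᵐ ω ∂μ,
      (∃ L : K, Tendsto (fun n : ℕ => ∑ k ∈ Finset.range n,
          ((∑ i ∈ Finset.range (k + 1), ζ i ω) ^ (-(1 / α))) • ε k ω)
        atTop (𝓝 L)) ∧
      (∑' k : ℕ,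
          edist (((∑ i ∈ Finset.range (k + 1), ζ i ω) ^ (-(1 / α))) • ε k ω) o) ≠ ⊤ :=
  lepage_series_converges_of_subinvariant_norm_general o hhom hsub α hα0 hα1 μ ζ hζmeas hζindep
    hζexp ε hεsphere
end

section
/- Let K be a convex cone with involution ⋆ and let K̃ be a separating sub-semigroup of characters on K generating the Borel σ-algebra of K. Let ξ and η be independent K-valued random elements such that ξ+η is proper. Then E[χ(ξ)] ≠ 0 and E[χ(η)] ≠ 0 for every χ∈K̃; and if moreover ξ and ξ+η are both SαS with the same characteristic exponent α, then η is SαS with characteristic exponent α. -/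
/-!
Independence factorises Laplace transforms, `E χ(ξ + η) = E χ(ξ) E χ(η)`, which gives the first
two claims. For the stability claim fix `A, B ∈ K̃`, put `ψ = A · conj B` and
`L_ν(t) = ∫ ψ(t^{1/α} x) dν`. Since the mixed moments `∫ A · conj B` determine a law
(Stone–Weierstrass on its finite-dimensional marginals, which live on a compact polydisc),
`ν` is strictly `α`-stable iff every such `L_ν` solves `L(s) L(t) = L(s + t)` on `(0, ∞)`.
Now `L_{ξ+η} = L_ξ L_η`, so `L_η` inherits the equation once `L_{ξ+η}` never vanishes.
A solution vanishing at one point vanishes everywhere. For a single character `χ`,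
`L_{ξ+η}(1) ≠ 0` by properness, so `|L(2⁻ⁿ)| = |L(1)|^{2⁻ⁿ} → 1`; at a scale where the
transforms of `A` and `B` both exceed `3/4` in modulus, the variance bound
`|∫ A conj B - ∫ A · conj ∫ B| ≤ 1 - (|∫ A|² + |∫ B|²) / 2` keeps the mixed transform away from 0.
-/

open Filter Topology MeasureTheory

/-- A character on the semigroup `K` with involution `inv`: a map into the closed unit
disk of `ℂ` with `χ e = 1` (Lean's `0 : K` is the neutral element `e`), multiplicative,
and intertwining the involution with complex conjugation. -/
def IsChar {K : Type*} [AddCommMonoid K] (inv : K → K) (χ : K → ℂ) : Prop :=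
  (∀ x : K, ‖χ x‖ ≤ 1) ∧ χ 0 = 1 ∧
    (∀ x y : K, χ (x + y) = χ x * χ y) ∧
    ∀ x : K, χ (inv x) = (starRingEnd ℂ) (χ x)

open ComplexConjugate BoundedContinuousFunction

def IsExpOnPos (u : ℝ → ℂ) : Prop :=
  ∀ s t : ℝ, 0 < s → 0 < t → u s * u t = u (s + t)

namespace IsExpOnPos

variable {u v : ℝ → ℂ}

theorem ne_zero (hu : IsExpOnPos u) {t₀ t : ℝ} (ht₀ : 0 < t₀) (ht : 0 < t) (h : u t₀ ≠ 0) :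
    u t ≠ 0 := by
  have hpow (n : ℕ) : u ((n + 1) * t₀) = u t₀ ^ (n + 1) := by
    induction n with
    | zero => simp
    | succ n ih =>
      rw [pow_succ, ← ih, hu _ _ (by positivity) ht₀]
      push_cast; ring_nf
  obtain ⟨n, hn⟩ := exists_nat_gt (t / t₀)
  have hlt : t < (n + 1) * t₀ := by
    rw [div_lt_iff₀ ht₀] at hn; nlinarith
  have hsplit := hu t ((n + 1) * t₀ - t) ht (sub_pos.2 hlt)
  rw [add_sub_cancel, hpow] at hsplit
  exact left_ne_zero_of_mul (hsplit ▸ pow_ne_zero _ h)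

theorem tendsto_norm_half_pow (hu : IsExpOnPos u) (h1 : u 1 ≠ 0) :
    Tendsto (fun n : ℕ => ‖u ((1 / 2) ^ n)‖) atTop (𝓝 1) := by
  have hpow (n : ℕ) : ‖u ((1 / 2) ^ n)‖ ^ 2 ^ n = ‖u 1‖ := by
    induction n with
    | zero => simp
    | succ n ih =>
      have hhalf := hu ((1 / 2) ^ (n + 1)) ((1 / 2) ^ (n + 1)) (by positivity) (by positivity)
      rw [show ((1 : ℝ) / 2) ^ (n + 1) + (1 / 2) ^ (n + 1) = (1 / 2) ^ n by ring] at hhalf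
      rw [pow_succ' 2 n, pow_mul, sq, ← norm_mul, hhalf, ih]
  have hroot (n : ℕ) : ‖u ((1 / 2) ^ n)‖ = ‖u 1‖ ^ ((2 : ℝ) ^ n)⁻¹ := by
    have h := Real.pow_rpow_inv_natCast (norm_nonneg (u ((1 / 2) ^ n))) (pow_ne_zero n two_ne_zero)
    push_cast at h
    rw [← h, hpow]
  have hexp : Tendsto (fun n : ℕ => ((2 : ℝ) ^ n)⁻¹) atTop (𝓝 0) :=
    tendsto_inv_atTop_zero.comp (tendsto_pow_atTop_atTop_of_one_lt one_lt_two)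
  have hlim := ((Real.continuousAt_const_rpow (norm_ne_zero_iff.2 h1)).tendsto).comp hexp
  rw [Real.rpow_zero] at hlim
  simp only [hroot]
  exact hlim

theorem of_mul {w : ℝ → ℂ} (hw : IsExpOnPos w) (hu : IsExpOnPos u)
    (hwuv : ∀ t, 0 < t → w t = u t * v t) (hw0 : ∀ t, 0 < t → w t ≠ 0) : IsExpOnPos v := by
  intro s t hs ht
  have hst : 0 < s + t := by positivity
  refine mul_left_cancel₀ (left_ne_zero_of_mul (hwuv _ hst ▸ hw0 _ hst)) ?_
  calc u (s + t) * (v s * v t) = w s * w t := by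
        rw [hwuv s hs, hwuv t ht, ← hu s t hs ht]; ring
    _ = u (s + t) * v (s + t) := by rw [hw s t hs ht, hwuv _ hst]

end IsExpOnPos

section Variance

variable {X : Type*} [MeasurableSpace X] {ν : Measure X} [IsProbabilityMeasure ν]

theorem integrable_norm_sub_integral_sq {E : Type*} [NormedAddCommGroup E] [NormedSpace ℝ E]
    {f : X → E} (hf : AEStronglyMeasurable f ν) (hf1 : ∀ x, ‖f x‖ ≤ 1) :
    Integrable (fun x => ‖f x - ∫ y, f y ∂ν‖ ^ 2) ν := by
  refine .of_bound ((hf.sub aestronglyMeasurable_const).norm.pow 2) (2 ^ 2)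
    (ae_of_all _ fun x => ?_)
  have hint : ‖∫ y, f y ∂ν‖ ≤ 1 := by
    simpa using norm_integral_le_of_norm_le_const (μ := ν) (ae_of_all _ hf1)
  rw [Real.norm_of_nonneg (by positivity)]
  gcongr
  exact (norm_sub_le _ _).trans (by linarith [hf1 x])

theorem integral_norm_sub_integral_sq_le {E : Type*} [NormedAddCommGroup E]
    [InnerProductSpace ℝ E] [CompleteSpace E] {f : X → E} (hf : AEStronglyMeasurable f ν)
    (hf1 : ∀ x, ‖f x‖ ≤ 1) :
    ∫ x, ‖f x - ∫ y, f y ∂ν‖ ^ 2 ∂ν ≤ 1 - ‖∫ x, f x ∂ν‖ ^ 2 := by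
  set c := ∫ x, f x ∂ν
  have hfi : Integrable f ν := .of_bound hf 1 (ae_of_all _ hf1)
  have hsq1 (x : X) : ‖f x‖ ^ 2 ≤ 1 := pow_le_one₀ (norm_nonneg _) (hf1 x)
  have hsq : Integrable (fun x => ‖f x‖ ^ 2) ν :=
    .of_bound (hf.norm.pow 2) 1 (ae_of_all _ fun x => by simpa using hsq1 x)
  have hinner : Integrable (fun x => 2 * inner ℝ c (f x)) ν := (hfi.const_inner c).const_mul 2
  have hsq_sub : Integrable (fun x => ‖f x‖ ^ 2 - 2 * inner ℝ c (f x)) ν := hsq.sub hinner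
  calc ∫ x, ‖f x - c‖ ^ 2 ∂ν = ∫ x, (‖f x‖ ^ 2 - 2 * inner ℝ c (f x) + ‖c‖ ^ 2) ∂ν := by
        simp only [norm_sub_sq_real, real_inner_comm]
    _ = ∫ x, ‖f x‖ ^ 2 ∂ν - 2 * ‖c‖ ^ 2 + ‖c‖ ^ 2 := by
        rw [integral_add hsq_sub (integrable_const _), integral_sub hsq hinner,
          integral_const_mul, integral_inner hfi c, real_inner_self_eq_norm_sq]
        simp
    _ ≤ 1 - ‖c‖ ^ 2 := by
        have : ∫ x, ‖f x‖ ^ 2 ∂ν ≤ 1 :=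
          (integral_mono hsq (integrable_const 1) hsq1).trans (by simp)
        linarith

theorem integral_sub_integral_mul_conj_sub_integral {A B : X → ℂ} (hA : Integrable A ν)
    (hB : Integrable B ν) (hAB : Integrable (fun x => A x * conj (B x)) ν) :
    ∫ x, (A x - ∫ y, A y ∂ν) * conj (B x - ∫ y, B y ∂ν) ∂ν
      = ∫ x, A x * conj (B x) ∂ν - (∫ x, A x ∂ν) * conj (∫ x, B x ∂ν) := by
  set c := ∫ x, A x ∂ν
  set d := ∫ x, B x ∂ν
  have hcB : Integrable (fun x => c * conj (B x)) ν :=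
    (hB.mono hB.aestronglyMeasurable.star (ae_of_all _ fun x => by simp)).const_mul c
  have hAc : Integrable (fun x => A x - c) ν := hA.sub (integrable_const c)
  have hABc : Integrable (fun x => A x * conj (B x) - c * conj (B x)) ν := hAB.sub hcB
  have hexpand (x : X) : (A x - c) * conj (B x - d)
      = (A x * conj (B x) - c * conj (B x)) - (A x - c) * conj d := by
    rw [map_sub]; ring
  simp only [hexpand]
  rw [integral_sub hABc (hAc.mul_const _), integral_sub hAB hcB, integral_mul_const,
    integral_sub hA (integrable_const c), integral_const_mul, integral_conj]
  simp [c, d]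

theorem norm_integral_mul_conj_sub_le {A B : X → ℂ} (hA : AEStronglyMeasurable A ν)
    (hB : AEStronglyMeasurable B ν) (hA1 : ∀ x, ‖A x‖ ≤ 1) (hB1 : ∀ x, ‖B x‖ ≤ 1) :
    ‖∫ x, A x * conj (B x) ∂ν - (∫ x, A x ∂ν) * conj (∫ x, B x ∂ν)‖
      ≤ 1 - (‖∫ x, A x ∂ν‖ ^ 2 + ‖∫ x, B x ∂ν‖ ^ 2) / 2 := by
  set c := ∫ x, A x ∂ν
  set d := ∫ x, B x ∂ν
  have hAB : Integrable (fun x => A x * conj (B x)) ν :=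
    .of_bound (hA.mul hB.star) 1 (ae_of_all _ fun x => by
      simpa using mul_le_one₀ (hA1 x) (norm_nonneg _) (hB1 x))
  have hvarA := integrable_norm_sub_integral_sq hA hA1
  have hvarB := integrable_norm_sub_integral_sq hB hB1
  rw [← integral_sub_integral_mul_conj_sub_integral (.of_bound hA 1 (ae_of_all _ hA1))
    (.of_bound hB 1 (ae_of_all _ hB1)) hAB]
  calc ‖∫ x, (A x - c) * conj (B x - d) ∂ν‖
      ≤ ∫ x, (‖A x - c‖ ^ 2 + ‖B x - d‖ ^ 2) / 2 ∂ν := by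
        refine norm_integral_le_of_norm_le ((hvarA.add hvarB).div_const 2)
          (ae_of_all _ fun x => ?_)
        rw [norm_mul, RCLike.norm_conj]
        nlinarith [sq_nonneg (‖A x - c‖ - ‖B x - d‖)]
    _ = (∫ x, ‖A x - c‖ ^ 2 ∂ν + ∫ x, ‖B x - d‖ ^ 2 ∂ν) / 2 := by
        rw [integral_div, integral_add hvarA hvarB]
    _ ≤ 1 - (‖c‖ ^ 2 + ‖d‖ ^ 2) / 2 := by
        linarith [integral_norm_sub_integral_sq_le hA hA1, integral_norm_sub_integral_sq_le hB hB1]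

theorem integral_mul_conj_ne_zero {A B : X → ℂ} (hA : AEStronglyMeasurable A ν)
    (hB : AEStronglyMeasurable B ν) (hA1 : ∀ x, ‖A x‖ ≤ 1) (hB1 : ∀ x, ‖B x‖ ≤ 1)
    (hA34 : 3 / 4 < ‖∫ x, A x ∂ν‖) (hB34 : 3 / 4 < ‖∫ x, B x ∂ν‖) :
    ∫ x, A x * conj (B x) ∂ν ≠ 0 := by
  intro h0
  have hest := norm_integral_mul_conj_sub_le hA hB hA1 hB1
  rw [h0, zero_sub, norm_neg, norm_mul, RCLike.norm_conj] at hest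
  nlinarith

end Variance

theorem MeasureTheory.ext_of_forall_mem_starClosed_submonoid_integral_eq
    {E : Type*} [TopologicalSpace E] [PolishSpace E] [MeasurableSpace E] [BorelSpace E]
    {P P' : Measure E} [IsFiniteMeasure P] [IsFiniteMeasure P']
    (S : Submonoid (E →ᵇ ℂ)) (hS_star : ∀ g ∈ S, star g ∈ S)
    (hS_sep : ∀ x y, x ≠ y → ∃ g ∈ S, g x ≠ g y)
    (heq : ∀ g ∈ S, ∫ x, g x ∂P = ∫ x, g x ∂P') : P = P' := by
  have hspan : (StarAlgebra.adjoin ℂ (S : Set (E →ᵇ ℂ))).toSubalgebra.toSubmodule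
      = Submodule.span ℂ S := by
    rw [StarAlgebra.adjoin_toSubalgebra, Set.union_eq_left.2 fun g hg => by
      simpa using hS_star _ hg, Algebra.adjoin_eq_span, Submonoid.closure_eq]
  refine ext_of_forall_mem_subalgebra_integral_eq_of_polish
    (A := StarAlgebra.adjoin ℂ (S : Set (E →ᵇ ℂ))) ?_ fun g hgA => ?_
  · intro x y hxy
    obtain ⟨g, hgS, hg⟩ := hS_sep x y hxy
    exact ⟨g, ⟨_, ⟨g, StarAlgebra.subset_adjoin ℂ _ hgS, rfl⟩, rfl⟩, hg⟩
  · have hg : g ∈ Submodule.span ℂ (S : Set (E →ᵇ ℂ)) := hspan ▸ hgA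
    clear hgA
    induction hg using Submodule.span_induction with
    | mem g hg => exact heq g hg
    | zero => simp
    | add f g _ _ hf hg =>
      simp only [BoundedContinuousFunction.coe_add, Pi.add_apply]
      rw [integral_add (f.integrable P) (g.integrable P),
        integral_add (f.integrable P') (g.integrable P'), hf, hg]
    | smul c g _ hg =>
      simp only [BoundedContinuousFunction.coe_smul]
      rw [integral_smul, integral_smul, hg]

section Moments

variable {K : Type*} [MeasurableSpace K] {Kt : Set (K → ℂ)}

def toPolydisc {ι : Type*} (c : ι → K → ℂ) (hc : ∀ i x, ‖c i x‖ ≤ 1) (x : K) :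
    ι → Metric.closedBall (0 : ℂ) 1 :=
  fun i => ⟨c i x, mem_closedBall_zero_iff.2 (hc i x)⟩

theorem measurable_toPolydisc {ι : Type*} {c : ι → K → ℂ} (hc : ∀ i x, ‖c i x‖ ≤ 1)
    (hmeas : ∀ i, Measurable (c i)) : Measurable (toPolydisc c hc) :=
  measurable_pi_lambda _ fun i => (hmeas i).subtype_mk

theorem map_toPolydisc_eq_of_integral_mul_conj_eq
    (hone : (fun _ : K => (1 : ℂ)) ∈ Kt) (hmul : ∀ χ₁ ∈ Kt, ∀ χ₂ ∈ Kt, (fun x => χ₁ x * χ₂ x) ∈ Kt)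
    (hmeas : ∀ χ ∈ Kt, Measurable χ)
    {ι : Type*} [Finite ι] {c : ι → K → ℂ} (hcKt : ∀ i, c i ∈ Kt) (hc : ∀ i x, ‖c i x‖ ≤ 1)
    {β₁ β₂ : Measure K} [IsFiniteMeasure β₁] [IsFiniteMeasure β₂]
    (H : ∀ A ∈ Kt, ∀ B ∈ Kt, ∫ x, A x * conj (B x) ∂β₁ = ∫ x, A x * conj (B x) ∂β₂) :
    β₁.map (toPolydisc c hc) = β₂.map (toPolydisc c hc) := by
  have hΦ := measurable_toPolydisc hc fun i => hmeas _ (hcKt i)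
  let S : Submonoid (_ →ᵇ ℂ) :=
    { carrier := {g | ∃ A ∈ Kt, ∃ B ∈ Kt, ∀ x, g (toPolydisc c hc x) = A x * conj (B x)}
      one_mem' := ⟨_, hone, _, hone, fun x => by simp⟩
      mul_mem' := by
        rintro f g ⟨A₁, hA₁, B₁, hB₁, hf⟩ ⟨A₂, hA₂, B₂, hB₂, hg⟩
        refine ⟨_, hmul _ hA₁ _ hA₂, _, hmul _ hB₁ _ hB₂, fun x => ?_⟩
        simp only [BoundedContinuousFunction.coe_mul, Pi.mul_apply, hf, hg, map_mul]
        ring }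
  let coord (i : ι) : (ι → Metric.closedBall (0 : ℂ) 1) →ᵇ ℂ :=
    mkOfCompact ⟨fun z => z i, continuous_subtype_val.comp (continuous_apply i)⟩
  refine ext_of_forall_mem_starClosed_submonoid_integral_eq S ?_ ?_ ?_
  · rintro g ⟨A, hA, B, hB, hg⟩
    exact ⟨B, hB, A, hA, fun x => by simp [hg, mul_comm]⟩
  · intro z w hzw
    obtain ⟨i, hi⟩ := Function.ne_iff.1 hzw
    exact ⟨coord i, ⟨c i, hcKt i, _, hone, fun x => by simp [coord, toPolydisc]⟩,
      fun h => hi (Subtype.ext h)⟩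
  · rintro g ⟨A, hA, B, hB, hg⟩
    rw [integral_map hΦ.aemeasurable g.continuous.aestronglyMeasurable,
      integral_map hΦ.aemeasurable g.continuous.aestronglyMeasurable]
    simp only [hg]
    exact H A hA B hB

theorem measurable_of_mem_of_iSup_comap_eq
    (hgen : (⨆ χ ∈ Kt, MeasurableSpace.comap χ inferInstance) = (inferInstance : MeasurableSpace K))
    {χ : K → ℂ} (hχ : χ ∈ Kt) : Measurable χ :=
  measurable_iff_comap_le.2 ((le_iSup₂_of_le χ hχ le_rfl).trans hgen.le)

theorem ext_of_integral_mul_conj_eq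
    (hone : (fun _ : K => (1 : ℂ)) ∈ Kt) (hmul : ∀ χ₁ ∈ Kt, ∀ χ₂ ∈ Kt, (fun x => χ₁ x * χ₂ x) ∈ Kt)
    (hbd : ∀ χ ∈ Kt, ∀ x, ‖χ x‖ ≤ 1)
    (hgen : (⨆ χ ∈ Kt, MeasurableSpace.comap χ inferInstance) = (inferInstance : MeasurableSpace K))
    {β₁ β₂ : Measure K} [IsFiniteMeasure β₁] [IsFiniteMeasure β₂]
    (H : ∀ A ∈ Kt, ∀ B ∈ Kt, ∫ x, A x * conj (B x) ∂β₁ = ∫ x, A x * conj (B x) ∂β₂) :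
    β₁ = β₂ := by
  -- `Ψ` identifies the σ-algebra of `K` with the product σ-algebra, so laws on `K` are
  -- determined by their finite-dimensional marginals under `Ψ`.
  let Ψ : K → (Kt → ℂ) := fun x χ => χ.1 x
  have hcomap : MeasurableSpace.comap Ψ inferInstance = ‹MeasurableSpace K› := by
    rw [MeasurableSpace.comap_process_pi (fun χ : Kt => χ.1)]
    exact iSup_subtype'.symm.trans hgen
  have hΨ : Measurable Ψ := measurable_iff_comap_le.2 hcomap.le
  have hmeas (χ) (hχ : χ ∈ Kt) : Measurable χ := measurable_of_mem_of_iSup_comap_eq hgen hχ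
  have hmarginal (I : Finset Kt) : (β₁.map Ψ).map I.restrict = (β₂.map Ψ).map I.restrict := by
    have hfactor : I.restrict ∘ Ψ = (fun z i => (z i : ℂ)) ∘
        toPolydisc (fun i : I => i.1.1) (fun i => hbd _ i.1.2) := rfl
    have hval : Measurable fun (z : I → Metric.closedBall (0 : ℂ) 1) (i : I) => (z i : ℂ) := by
      fun_prop
    have hΦ := measurable_toPolydisc (fun i : I => hbd _ i.1.2) fun i => hmeas _ i.1.2
    rw [Measure.map_map (Finset.measurable_restrict I) hΨ,
      Measure.map_map (Finset.measurable_restrict I) hΨ, hfactor,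
      ← Measure.map_map hval hΦ, ← Measure.map_map hval hΦ,
      map_toPolydisc_eq_of_integral_mul_conj_eq hone hmul hmeas (fun i => i.1.2) _ H]
  have hmap : β₁.map Ψ = β₂.map Ψ :=
    IsProjectiveLimit.unique (P := fun I => (β₁.map Ψ).map I.restrict) (fun _ => rfl)
      fun I => (hmarginal I).symm
  ext s hs
  rw [← hcomap] at hs
  obtain ⟨t, ht, rfl⟩ := hs
  rw [← Measure.map_apply hΨ ht, hmap, Measure.map_apply hΨ ht]

end Moments

theorem integral_comp_add_of_indepFun {K Ω : Type*} [AddCommMonoid K] [MeasurableSpace K]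
    [MeasurableSpace Ω] {μ : Measure Ω} {ψ : K → ℂ}
    {ξ η : Ω → K} (hξ : Measurable ξ) (hη : Measurable η) (hind : ProbabilityTheory.IndepFun ξ η μ)
    (hψ : Measurable ψ) (hψ_add : ∀ x y, ψ (x + y) = ψ x * ψ y) :
    ∫ ω, ψ (ξ ω + η ω) ∂μ = (∫ ω, ψ (ξ ω) ∂μ) * ∫ ω, ψ (η ω) ∂μ := by
  simp only [hψ_add]
  exact hind.integral_fun_comp_mul_comp hξ.aemeasurable hη.aemeasurable
    hψ.aestronglyMeasurable hψ.aestronglyMeasurable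

theorem mul_conj_add {K : Type*} [Add K] {A B : K → ℂ} (hA : ∀ x y, A (x + y) = A x * A y)
    (hB : ∀ x y, B (x + y) = B x * B y) (x y : K) :
    A (x + y) * conj (B (x + y)) = A x * conj (B x) * (A y * conj (B y)) := by
  rw [hA, hB, map_mul]; ring

section Cone

variable {K : Type*} [SMul ℝ K] [MeasurableSpace K]

noncomputable def scaledTransform (α : ℝ) (ν : Measure K) (ψ : K → ℂ) (t : ℝ) : ℂ :=
  ∫ x, ψ (t ^ (1 / α) • x) ∂ν

theorem scaledTransform_one {α : ℝ} {ν : Measure K} {ψ : K → ℂ}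
    (hone_smul : ∀ x : K, (1 : ℝ) • x = x) :
    scaledTransform α ν ψ 1 = ∫ x, ψ x ∂ν := by
  simp [scaledTransform, hone_smul]

variable [AddCommMonoid K]

def IsStrictlyStable (α : ℝ) (ν : Measure K) : Prop :=
  ∀ a b : ℝ, 0 < a → 0 < b →
    Measure.map (fun p : K × K => (a ^ (1 / α)) • p.1 + (b ^ (1 / α)) • p.2) (ν.prod ν) =
      Measure.map (fun x : K => ((a + b) ^ (1 / α)) • x) ν

variable {α : ℝ} {ν : Measure K} {ψ : K → ℂ}

theorem scaledTransform_map_add {Ω : Type*} [MeasurableSpace Ω] {μ : Measure Ω}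
    (hadd : Measurable fun p : K × K => p.1 + p.2)
    (hsmul : ∀ c : ℝ, 0 < c → Measurable fun x : K => c • x)
    (hsmul_add : ∀ c : ℝ, 0 < c → ∀ x y : K, c • (x + y) = c • x + c • y)
    {ξ η : Ω → K} (hξ : Measurable ξ) (hη : Measurable η) (hind : ProbabilityTheory.IndepFun ξ η μ)
    (hψ : Measurable ψ) (hψ_add : ∀ x y, ψ (x + y) = ψ x * ψ y) {t : ℝ} (ht : 0 < t) :
    scaledTransform α (μ.map fun ω => ξ ω + η ω) ψ t
      = scaledTransform α (μ.map ξ) ψ t * scaledTransform α (μ.map η) ψ t := by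
  have hc : 0 < t ^ (1 / α) := Real.rpow_pos_of_pos ht _
  have hψc : Measurable fun x => ψ (t ^ (1 / α) • x) := hψ.comp (hsmul _ hc)
  have hζ : Measurable fun ω => ξ ω + η ω := hadd.comp (hξ.prodMk hη)
  simp only [scaledTransform]
  rw [integral_map hζ.aemeasurable hψc.aestronglyMeasurable,
    integral_map hξ.aemeasurable hψc.aestronglyMeasurable,
    integral_map hη.aemeasurable hψc.aestronglyMeasurable]
  exact integral_comp_add_of_indepFun hξ hη hind hψc fun x y => by rw [hsmul_add _ hc, hψ_add]

theorem integral_map_smul_add_smul [SFinite ν] (hadd : Measurable fun p : K × K => p.1 + p.2)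
    {a b : ℝ} (ha : Measurable fun x : K => a • x) (hb : Measurable fun x : K => b • x)
    (hψ : Measurable ψ) (hψ_add : ∀ x y, ψ (x + y) = ψ x * ψ y) :
    ∫ y, ψ y ∂(ν.prod ν).map (fun p : K × K => a • p.1 + b • p.2)
      = (∫ x, ψ (a • x) ∂ν) * ∫ x, ψ (b • x) ∂ν := by
  have hsum : Measurable fun p : K × K => a • p.1 + b • p.2 :=
    hadd.comp ((ha.comp measurable_fst).prodMk (hb.comp measurable_snd))
  rw [integral_map hsum.aemeasurable hψ.aestronglyMeasurable]
  simp only [hψ_add]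
  exact integral_prod_mul (fun x => ψ (a • x)) fun x => ψ (b • x)

theorem IsStrictlyStable.isExpOnPos_scaledTransform [SFinite ν] (hν : IsStrictlyStable α ν)
    (hadd : Measurable fun p : K × K => p.1 + p.2)
    (hsmul : ∀ c : ℝ, 0 < c → Measurable fun x : K => c • x)
    (hψ : Measurable ψ) (hψ_add : ∀ x y, ψ (x + y) = ψ x * ψ y) :
    IsExpOnPos (scaledTransform α ν ψ) := by
  intro s t hs ht
  have hsmul' (r : ℝ) (hr : 0 < r) := hsmul _ (Real.rpow_pos_of_pos hr (1 / α))
  rw [scaledTransform, scaledTransform, ← integral_map_smul_add_smul hadd (hsmul' s hs)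
    (hsmul' t ht) hψ hψ_add, hν s t hs ht,
    integral_map (hsmul' _ (add_pos hs ht)).aemeasurable hψ.aestronglyMeasurable, scaledTransform]

theorem isStrictlyStable_of_isExpOnPos {Kt : Set (K → ℂ)} (hone : (fun _ : K => (1 : ℂ)) ∈ Kt)
    (hmul : ∀ χ₁ ∈ Kt, ∀ χ₂ ∈ Kt, (fun x => χ₁ x * χ₂ x) ∈ Kt)
    (hbd : ∀ χ ∈ Kt, ∀ x, ‖χ x‖ ≤ 1) (hKt_add : ∀ χ ∈ Kt, ∀ x y, χ (x + y) = χ x * χ y)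
    (hgen : (⨆ χ ∈ Kt, MeasurableSpace.comap χ inferInstance) = (inferInstance : MeasurableSpace K))
    (hadd : Measurable fun p : K × K => p.1 + p.2)
    (hsmul : ∀ c : ℝ, 0 < c → Measurable fun x : K => c • x) [IsFiniteMeasure ν]
    (h : ∀ A ∈ Kt, ∀ B ∈ Kt, IsExpOnPos (scaledTransform α ν fun x => A x * conj (B x))) :
    IsStrictlyStable α ν := by
  intro a b ha hb
  have hsmul' (r : ℝ) (hr : 0 < r) := hsmul _ (Real.rpow_pos_of_pos hr (1 / α))
  refine ext_of_integral_mul_conj_eq hone hmul hbd hgen fun A hA B hB => ?_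
  have hψ : Measurable fun x => A x * conj (B x) :=
    (measurable_of_mem_of_iSup_comap_eq hgen hA).mul
      (continuous_star.measurable.comp (measurable_of_mem_of_iSup_comap_eq hgen hB))
  rw [integral_map_smul_add_smul hadd (hsmul' a ha) (hsmul' b hb) hψ
      (mul_conj_add (hKt_add A hA) (hKt_add B hB)),
    integral_map (hsmul' _ (add_pos ha hb)).aemeasurable hψ.aestronglyMeasurable]
  exact h A hA B hB a b ha hb

theorem IsStrictlyStable.scaledTransform_mul_conj_ne_zero [IsProbabilityMeasure ν]
    (hν : IsStrictlyStable α ν) (hadd : Measurable fun p : K × K => p.1 + p.2)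
    (hsmul : ∀ c : ℝ, 0 < c → Measurable fun x : K => c • x) {A B : K → ℂ}
    (hAm : Measurable A) (hBm : Measurable B) (hA1 : ∀ x, ‖A x‖ ≤ 1) (hB1 : ∀ x, ‖B x‖ ≤ 1)
    (hA_add : ∀ x y, A (x + y) = A x * A y) (hB_add : ∀ x y, B (x + y) = B x * B y)
    (hA : scaledTransform α ν A 1 ≠ 0) (hB : scaledTransform α ν B 1 ≠ 0) {s : ℝ} (hs : 0 < s) :
    scaledTransform α ν (fun x => A x * conj (B x)) s ≠ 0 := by
  have hnear (χ : K → ℂ) (hχ : Measurable χ) (hχ_add : ∀ x y, χ (x + y) = χ x * χ y)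
      (h1 : scaledTransform α ν χ 1 ≠ 0) :
      ∀ᶠ n : ℕ in atTop, 3 / 4 < ‖scaledTransform α ν χ ((1 / 2) ^ n)‖ :=
    ((hν.isExpOnPos_scaledTransform hadd hsmul hχ hχ_add).tendsto_norm_half_pow h1).eventually
      (lt_mem_nhds (by norm_num))
  obtain ⟨n, hnA, hnB⟩ := ((hnear A hAm hA_add hA).and (hnear B hBm hB_add hB)).exists
  have ht : (0 : ℝ) < (1 / 2) ^ n := by positivity
  have hc := hsmul _ (Real.rpow_pos_of_pos ht (1 / α))
  refine (hν.isExpOnPos_scaledTransform hadd hsmul (hAm.mul (continuous_star.measurable.comp hBm))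
    (mul_conj_add hA_add hB_add)).ne_zero ht hs ?_
  exact integral_mul_conj_ne_zero (hAm.comp hc).aestronglyMeasurable
    (hBm.comp hc).aestronglyMeasurable (fun _ => hA1 _) (fun _ => hB1 _) hnA hnB

end Cone

theorem summands_of_proper_are_proper_and_SaS_general
    {K : Type*} [MetricSpace K] [PolishSpace K] [AddCommMonoid K] [SMul ℝ K]
    [MeasurableSpace K] [BorelSpace K]
    (hadd_cont : Continuous fun p : K × K => p.1 + p.2)
    (hsmul_cont : ContinuousOn (fun p : ℝ × K => p.1 • p.2)
      (Set.Ioi (0 : ℝ) ×ˢ (Set.univ : Set K)))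
    (hsmul_add : ∀ a : ℝ, 0 < a → ∀ x y : K, a • (x + y) = a • x + a • y)
    (hone_smul : ∀ x : K, (1 : ℝ) • x = x)
    (inv : K → K)
    (Kt : Set (K → ℂ))
    (hKt_char : ∀ χ ∈ Kt, IsChar inv χ)
    (hKt_one : (fun _ : K => (1 : ℂ)) ∈ Kt)
    (hKt_mul : ∀ χ₁ ∈ Kt, ∀ χ₂ ∈ Kt, (fun x => χ₁ x * χ₂ x) ∈ Kt)
    (hgen : (⨆ χ ∈ Kt, MeasurableSpace.comap χ inferInstance)
      = (inferInstance : MeasurableSpace K))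
    {Ω : Type*} [MeasurableSpace Ω] (μ : Measure Ω) [IsProbabilityMeasure μ]
    (ξ η : Ω → K) (hξmeas : Measurable ξ) (hηmeas : Measurable η)
    (hindep : ProbabilityTheory.IndepFun ξ η μ)
    (hproper : ∀ χ ∈ Kt, ∫ ω, χ (ξ ω + η ω) ∂μ ≠ 0)
    (α : ℝ) :
    (∀ χ ∈ Kt, ∫ ω, χ (ξ ω) ∂μ ≠ 0) ∧ (∀ χ ∈ Kt, ∫ ω, χ (η ω) ∂μ ≠ 0) ∧
    ((∀ a b : ℝ, 0 < a → 0 < b →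
        Measure.map (fun p : K × K => (a ^ (1 / α)) • p.1 + (b ^ (1 / α)) • p.2)
            ((μ.map ξ).prod (μ.map ξ)) =
          Measure.map (fun x : K => ((a + b) ^ (1 / α)) • x) (μ.map ξ)) →
      (∀ a b : ℝ, 0 < a → 0 < b →
        Measure.map (fun p : K × K => (a ^ (1 / α)) • p.1 + (b ^ (1 / α)) • p.2)
            ((μ.map (fun ω => ξ ω + η ω)).prod (μ.map (fun ω => ξ ω + η ω))) =
          Measure.map (fun x : K => ((a + b) ^ (1 / α)) • x)
            (μ.map (fun ω => ξ ω + η ω))) →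
      ∀ a b : ℝ, 0 < a → 0 < b →
        Measure.map (fun p : K × K => (a ^ (1 / α)) • p.1 + (b ^ (1 / α)) • p.2)
            ((μ.map η).prod (μ.map η)) =
          Measure.map (fun x : K => ((a + b) ^ (1 / α)) • x) (μ.map η)) := by
  have hadd : Measurable fun p : K × K => p.1 + p.2 := hadd_cont.measurable
  have hsmul (c : ℝ) (hc : 0 < c) : Measurable fun x : K => c • x :=
    (hsmul_cont.comp_continuous (continuous_const.prodMk continuous_id)
      fun _ => ⟨hc, trivial⟩).measurable
  have hζ : Measurable fun ω => ξ ω + η ω := hadd.comp (hξmeas.prodMk hηmeas)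
  have hmeas {χ} (hχ : χ ∈ Kt) : Measurable χ := measurable_of_mem_of_iSup_comap_eq hgen hχ
  have hKt_add {χ} (hχ : χ ∈ Kt) := (hKt_char χ hχ).2.2.1
  have hfactor {χ} (hχ : χ ∈ Kt) :=
    integral_comp_add_of_indepFun hξmeas hηmeas hindep (hmeas hχ) (hKt_add hχ)
  refine ⟨fun χ hχ h0 => hproper χ hχ (by rw [hfactor hχ, h0, zero_mul]),
    fun χ hχ h0 => hproper χ hχ (by rw [hfactor hχ, h0, mul_zero]), fun hξ_stable hζ_stable => ?_⟩
  refine isStrictlyStable_of_isExpOnPos hKt_one hKt_mul (fun χ hχ => (hKt_char χ hχ).1)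
    (fun χ hχ => hKt_add hχ) hgen hadd hsmul fun A hA B hB => ?_
  have hψ := (hmeas hA).mul (continuous_star.measurable.comp (hmeas hB))
  have hψ_add := mul_conj_add (hKt_add hA) (hKt_add hB)
  have : IsProbabilityMeasure (μ.map fun ω => ξ ω + η ω) :=
    Measure.isProbabilityMeasure_map hζ.aemeasurable
  have hζ_proper {χ} (hχ : χ ∈ Kt) : scaledTransform α (μ.map fun ω => ξ ω + η ω) χ 1 ≠ 0 := by
    rw [scaledTransform_one hone_smul, integral_map hζ.aemeasurable (hmeas hχ).aestronglyMeasurable]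
    exact hproper χ hχ
  exact (IsStrictlyStable.isExpOnPos_scaledTransform hζ_stable hadd hsmul hψ hψ_add).of_mul
    (IsStrictlyStable.isExpOnPos_scaledTransform hξ_stable hadd hsmul hψ hψ_add)
    (fun t ht => scaledTransform_map_add hadd hsmul hsmul_add hξmeas hηmeas hindep hψ hψ_add ht)
    fun t ht => IsStrictlyStable.scaledTransform_mul_conj_ne_zero hζ_stable hadd hsmul
      (hmeas hA) (hmeas hB) (hKt_char A hA).1 (hKt_char B hB).1 (hKt_add hA) (hKt_add hB)
      (hζ_proper hA) (hζ_proper hB) ht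

/-- Let `K` be a convex cone with involution `inv` and let `Kt` be a
separating sub-semigroup of characters on `K` generating the Borel σ-algebra of `K`.
Let `ξ` and `η` be independent `K`-valued random elements such that `ξ + η` is proper
(non-trivial, with non-vanishing Laplace transform).  Then `E[χ(ξ)] ≠ 0` and
`E[χ(η)] ≠ 0` for every `χ ∈ Kt`; and if moreover `ξ` and `ξ + η` are both strictly
`α`-stable with the same exponent `α`, then `η` is strictly `α`-stable. -/
theorem summands_of_proper_are_proper_and_SaS
    {K : Type*} [MetricSpace K] [PolishSpace K] [AddCommMonoid K] [SMul ℝ K]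
    [MeasurableSpace K] [BorelSpace K]
    (hadd_cont : Continuous fun p : K × K => p.1 + p.2)
    (hsmul_cont : ContinuousOn (fun p : ℝ × K => p.1 • p.2)
      (Set.Ioi (0 : ℝ) ×ˢ (Set.univ : Set K)))
    (hsmul_add : ∀ a : ℝ, 0 < a → ∀ x y : K, a • (x + y) = a • x + a • y)
    (hsmul_assoc : ∀ a b : ℝ, 0 < a → 0 < b → ∀ x : K, a • (b • x) = (a * b) • x)
    (hone_smul : ∀ x : K, (1 : ℝ) • x = x)
    (hsmul_e : ∀ a : ℝ, 0 < a → a • (0 : K) = (0 : K))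
    (inv : K → K)
    (hinv_cont : Continuous inv)
    (hinv_add : ∀ x y : K, inv (x + y) = inv x + inv y)
    (hinv_invol : ∀ x : K, inv (inv x) = x)
    (hinv_smul : ∀ a : ℝ, 0 < a → ∀ x : K, inv (a • x) = a • inv x)
    (Kt : Set (K → ℂ))
    (hKt_char : ∀ χ ∈ Kt, IsChar inv χ)
    (hKt_one : (fun _ : K => (1 : ℂ)) ∈ Kt)
    (hKt_mul : ∀ χ₁ ∈ Kt, ∀ χ₂ ∈ Kt, (fun x => χ₁ x * χ₂ x) ∈ Kt)
    (hsep : ∀ x y : K, x ≠ y → ∃ χ ∈ Kt, χ x ≠ χ y)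
    (hgen : (⨆ χ ∈ Kt, MeasurableSpace.comap χ inferInstance)
      = (inferInstance : MeasurableSpace K))
    {Ω : Type*} [MeasurableSpace Ω] (μ : Measure Ω) [IsProbabilityMeasure μ]
    (ξ η : Ω → K) (hξmeas : Measurable ξ) (hηmeas : Measurable η)
    (hindep : ProbabilityTheory.IndepFun ξ η μ)
    (hnontriv : μ {ω | ξ ω + η ω = (0 : K)} < 1)
    (hproper : ∀ χ ∈ Kt, ∫ ω, χ (ξ ω + η ω) ∂μ ≠ 0)
    (α : ℝ) (hα : α ≠ 0) :
    (∀ χ ∈ Kt, ∫ ω, χ (ξ ω) ∂μ ≠ 0) ∧ (∀ χ ∈ Kt, ∫ ω, χ (η ω) ∂μ ≠ 0) ∧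
    ((∀ a b : ℝ, 0 < a → 0 < b →
        Measure.map (fun p : K × K => (a ^ (1 / α)) • p.1 + (b ^ (1 / α)) • p.2)
            ((μ.map ξ).prod (μ.map ξ)) =
          Measure.map (fun x : K => ((a + b) ^ (1 / α)) • x) (μ.map ξ)) →
      (∀ a b : ℝ, 0 < a → 0 < b →
        Measure.map (fun p : K × K => (a ^ (1 / α)) • p.1 + (b ^ (1 / α)) • p.2)
            ((μ.map (fun ω => ξ ω + η ω)).prod (μ.map (fun ω => ξ ω + η ω))) =
          Measure.map (fun x : K => ((a + b) ^ (1 / α)) • x)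
            (μ.map (fun ω => ξ ω + η ω))) →
      ∀ a b : ℝ, 0 < a → 0 < b →
        Measure.map (fun p : K × K => (a ^ (1 / α)) • p.1 + (b ^ (1 / α)) • p.2)
            ((μ.map η).prod (μ.map η)) =
          Measure.map (fun x : K => ((a + b) ^ (1 / α)) • x) (μ.map η)) :=
  summands_of_proper_are_proper_and_SaS_general hadd_cont hsmul_cont hsmul_add hone_smul inv Kt
    hKt_char hKt_one hKt_mul hgen μ ξ η hξmeas hηmeas hindep hproper α
end

section
/- Assume Condition (C) and the second distributivity law. Then: (i) every proper SαS random element in K has characteristic exponent α ≤ 2; (ii) if the involution on K is the identity map, then α ≤ 1. If in addition Condition (E) holds, then α > 0 in both cases. -/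
open Filter Topology MeasureTheory

/-- A semicontinuous `[0,1]`-valued character (the modulus part in Condition (C)). -/
def IsModChar {K : Type*} [TopologicalSpace K] [AddCommMonoid K] (inv : K → K)
    (χ' : K → ℝ) : Prop :=
  (∀ x : K, χ' x ∈ Set.Icc (0 : ℝ) 1) ∧ χ' 0 = 1 ∧
    (∀ x y : K, χ' (x + y) = χ' x * χ' y) ∧ (∀ x : K, χ' (inv x) = χ' x) ∧
    (LowerSemicontinuous χ' ∨ UpperSemicontinuous χ')

/-- A continuous character with values in the unit circle (the argument part in
Condition (C)). -/
def IsArgChar {K : Type*} [TopologicalSpace K] [AddCommMonoid K] (inv : K → K)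
    (χ'' : K → ℂ) : Prop :=
  (∀ x : K, ‖χ'' x‖ = 1) ∧ χ'' 0 = 1 ∧
    (∀ x y : K, χ'' (x + y) = χ'' x * χ'' y) ∧
    (∀ x : K, χ'' (inv x) = (starRingEnd ℂ) (χ'' x)) ∧ Continuous χ''

/-- Condition (C): `Kt` is a cone of characters (containing `1`, closed under pointwise
multiplication and under the rescalings `χ ↦ χ (a • ·)`, `a > 0`) such that every
`χ ∈ Kt` factorises as the product of a semicontinuous `[0,1]`-valued character and a
continuous unit-circle-valued character, and `Kt` possesses a countable strictly
separating sub-family. -/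
def ConditionC {K : Type*} [TopologicalSpace K] [AddCommMonoid K] [SMul ℝ K]
    (inv : K → K) (Kt : Set (K → ℂ)) : Prop :=
  (∀ χ ∈ Kt, IsChar inv χ) ∧
  ((fun _ : K => (1 : ℂ)) ∈ Kt) ∧
  (∀ χ₁ ∈ Kt, ∀ χ₂ ∈ Kt, (fun x => χ₁ x * χ₂ x) ∈ Kt) ∧
  (∀ a : ℝ, 0 < a → ∀ χ ∈ Kt, (fun x : K => χ (a • x)) ∈ Kt) ∧
  (∀ χ ∈ Kt, ∃ (χ' : K → ℝ) (χ'' : K → ℂ), IsModChar inv χ' ∧ IsArgChar inv χ'' ∧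
    ∀ x : K, χ x = (χ' x : ℂ) * χ'' x) ∧
  (∃ C : Set (K → ℂ), C ⊆ Kt ∧ C.Countable ∧ ∀ x y : K, x ≠ y →
    ∃ χ ∈ C, ∃ U ∈ 𝓝 x, ∃ V ∈ 𝓝 y, ∀ x' ∈ U, ∀ y' ∈ V, χ x' ≠ χ y')

open scoped Classical in
/-- Condition (E): `K` is pointed with origin `o` and, for every character `χ ∈ Kt` and
every `x ∈ E = K ∖ {o, e}`, `χ (s • x) → 1`, where `s ↓ 0` if `e = o` and `s → ∞`
otherwise (Lean's `0 : K` is the neutral element `e`). -/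
def ConditionE {K : Type*} [TopologicalSpace K] [AddCommMonoid K] [SMul ℝ K]
    (o : K) (Kt : Set (K → ℂ)) : Prop :=
  ∀ χ ∈ Kt, ∀ x : K, x ≠ o → x ≠ 0 →
    Filter.Tendsto (fun s : ℝ => χ (s • x))
      (if o = (0 : K) then nhdsWithin 0 (Set.Ioi 0) else Filter.atTop) (nhds 1)

lemma Complex.norm_pow_sub_one_le {z : ℂ} (hz : ‖z‖ ≤ 1) (n : ℕ) :
    ‖z ^ n - 1‖ ≤ n * ‖z - 1‖ := by
  induction n with
  | zero => simp
  | succ n ih =>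
    calc ‖z ^ (n + 1) - 1‖ = ‖z ^ n * (z - 1) + (z ^ n - 1)‖ := by ring_nf
      _ ≤ ‖z ^ n‖ * ‖z - 1‖ + n * ‖z - 1‖ :=
          (norm_add_le _ _).trans (by rw [norm_mul]; gcongr)
      _ ≤ 1 * ‖z - 1‖ + n * ‖z - 1‖ := by
          gcongr; rw [norm_pow]; exact pow_le_one₀ (norm_nonneg z) hz
      _ = (n + 1 : ℕ) * ‖z - 1‖ := by push_cast; ring

lemma Complex.one_sub_re_pow_le {z : ℂ} (hz : ‖z‖ ≤ 1) (n : ℕ) :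
    1 - (z ^ n).re ≤ n ^ 2 * (1 - z.re) := by
  have hsq : ‖z - 1‖ ^ 2 ≤ 2 * (1 - z.re) := by
    have : ‖z‖ ^ 2 ≤ 1 := pow_le_one₀ (norm_nonneg z) hz
    rw [← Complex.normSq_eq_norm_sq] at this ⊢
    simp only [Complex.normSq_apply, Complex.sub_re, Complex.sub_im, Complex.one_re,
      Complex.one_im] at this ⊢
    nlinarith
  induction n with
  | zero => simp
  | succ n ih =>
    have hstep : (z ^ n).re - (z ^ (n + 1)).re ≤ (2 * n + 1) * (1 - z.re) := by
      have hre : (z ^ n).re - (z ^ (n + 1)).re = ((z ^ n - 1) * (1 - z)).re + (1 - z.re) := by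
        have := congrArg Complex.re
          (show z ^ n - z ^ (n + 1) = (z ^ n - 1) * (1 - z) + (1 - z) by ring)
        rwa [Complex.sub_re, Complex.add_re, Complex.sub_re (1 : ℂ), Complex.one_re] at this
      have : ((z ^ n - 1) * (1 - z)).re ≤ n * ‖z - 1‖ ^ 2 :=
        calc ((z ^ n - 1) * (1 - z)).re ≤ ‖z ^ n - 1‖ * ‖z - 1‖ := by
              rw [← norm_neg (z - 1), neg_sub, ← norm_mul]; exact Complex.re_le_norm _
          _ ≤ n * ‖z - 1‖ * ‖z - 1‖ := by gcongr; exact Complex.norm_pow_sub_one_le hz n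
          _ = n * ‖z - 1‖ ^ 2 := by ring
      nlinarith
    push_cast
    nlinarith

lemma one_le_of_one_sub_le_pow_mul_one_sub_rpow {c α : ℝ} {p : ℕ} (hc : 0 < c) (hpα : p < α)
    (h : ∀ n : ℕ, 0 < n → 1 - c ≤ (n : ℝ) ^ p * (1 - c ^ ((n : ℝ) ^ (-α)))) : 1 ≤ c := by
  have hbound : ∀ n : ℕ, 1 ≤ n → 1 - c ≤ -Real.log c * (n : ℝ) ^ (-(α - p)) := by
    intro n hn
    have hn' : (0 : ℝ) < n := by exact_mod_cast hn
    have hexp : 1 - c ^ ((n : ℝ) ^ (-α)) ≤ -Real.log c * (n : ℝ) ^ (-α) := by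
      rw [Real.rpow_def_of_pos hc]
      linarith [Real.add_one_le_exp (Real.log c * (n : ℝ) ^ (-α))]
    calc 1 - c ≤ (n : ℝ) ^ p * (1 - c ^ ((n : ℝ) ^ (-α))) := h n hn
      _ ≤ (n : ℝ) ^ p * (-Real.log c * (n : ℝ) ^ (-α)) := by gcongr
      _ = -Real.log c * (n : ℝ) ^ (-(α - p)) := by
          rw [neg_sub, Real.rpow_sub hn', Real.rpow_natCast, Real.rpow_neg hn'.le]; ring
  have hlim : Tendsto (fun n : ℕ => -Real.log c * (n : ℝ) ^ (-(α - p))) atTop (𝓝 0) := by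
    simpa using ((tendsto_rpow_neg_atTop (sub_pos.2 hpα)).comp
      tendsto_natCast_atTop_atTop).const_mul (-Real.log c)
  linarith [ge_of_tendsto hlim (eventually_atTop.2 ⟨1, hbound⟩)]

lemma map_natCast_mul_eq_pow {M : Type*} [Monoid M] {u : ℝ → M}
    (hu : ∀ s t, 0 < s → 0 < t → u (s + t) = u s * u t) {n : ℕ} (hn : n ≠ 0) {s : ℝ}
    (hs : 0 < s) : u (n * s) = u s ^ n := by
  obtain ⟨k, rfl⟩ := Nat.exists_eq_succ_of_ne_zero hn
  induction k with
  | zero => simp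
  | succ k ih =>
    rw [Nat.cast_succ, add_mul, one_mul, hu _ _ (by positivity) hs, ih k.succ_ne_zero]
    exact (pow_succ _ _).symm

lemma eq_mul_of_map_add_of_monotoneOn {v : ℝ → ℝ}
    (hv : ∀ s t, 0 < s → 0 < t → v (s + t) = v s + v t) (hmono : MonotoneOn v (Set.Ioi 0))
    {s : ℝ} (hs : 0 < s) : v s = s * v 1 := by
  have hnat : ∀ n : ℕ, n ≠ 0 → ∀ x, 0 < x → v (n * x) = n * v x := fun n hn x hx => by
    simpa using congrArg Multiplicative.toAdd
      (map_natCast_mul_eq_pow (u := fun s => Multiplicative.ofAdd (v s))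
        (fun s t hs ht => by simp [hv s t hs ht]) hn hx)
  have hv1 : 0 ≤ v 1 := by
    have := hmono (Set.mem_Ioi.2 one_pos) (Set.mem_Ioi.2 two_pos) one_le_two
    have h2 := hnat 2 two_ne_zero 1 one_pos
    norm_num at h2
    linarith
  -- Compare `v x` with `v m` for the integer `m ∈ (x, x + 1]`.
  have hclose : ∀ x, 0 < x → |v x - x * v 1| ≤ v 1 := by
    intro x hx
    set m : ℕ := ⌊x⌋₊ + 1
    have hxm : x < m := by simpa [m] using Nat.lt_floor_add_one x
    have hmx : (m : ℝ) ≤ x + 1 := by simp only [m]; push_cast; linarith [Nat.floor_le hx.le]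
    have hvm : v m = m * v 1 := by simpa using hnat m (Nat.succ_ne_zero _) 1 one_pos
    have hsplit : v m = v x + v (m - x) := by rw [← hv x _ hx (sub_pos.2 hxm), add_sub_cancel]
    have h1 : v x ≤ v m := hmono hx (hx.trans hxm) hxm.le
    have h2 : v (m - x) ≤ v 1 := hmono (sub_pos.2 hxm) (Set.mem_Ioi.2 one_pos) (by linarith)
    rw [abs_le]; constructor <;> nlinarith
  by_contra hne
  have hpos : 0 < |v s - s * v 1| := abs_pos.2 (sub_ne_zero.2 hne)
  obtain ⟨n, hn⟩ := exists_nat_gt (v 1 / |v s - s * v 1|)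
  have hn0 : (0 : ℝ) < n := (div_nonneg hv1 hpos.le).trans_lt hn
  have hclose_n := hclose (n * s) (by positivity)
  rw [hnat n (by exact_mod_cast hn0.ne') s hs, mul_assoc, ← mul_sub, abs_mul,
    abs_of_pos hn0] at hclose_n
  rw [div_lt_iff₀ hpos] at hn
  linarith

lemma eq_rpow_of_map_add_eq_mul {u : ℝ → ℝ}
    (hu : ∀ s t, 0 < s → 0 < t → u (s + t) = u s * u t)
    (hmem : ∀ s, 0 < s → u s ∈ Set.Icc (0 : ℝ) 1) {s : ℝ} (hs : 0 < s) : u s = u 1 ^ s := by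
  have hanti : AntitoneOn u (Set.Ioi 0) := by
    intro a ha b hb hab
    rcases hab.eq_or_lt with rfl | hlt
    · rfl
    · have := hu a (b - a) ha (sub_pos.2 hlt)
      rw [add_sub_cancel] at this
      rw [this]
      exact mul_le_of_le_one_right (hmem a ha).1 (hmem _ (sub_pos.2 hlt)).2
  have hnat : ∀ n : ℕ, n ≠ 0 → u n = u 1 ^ n := fun n hn => by
    simpa using map_natCast_mul_eq_pow hu hn one_pos
  rcases (hmem 1 one_pos).1.eq_or_lt with h1 | h1
  · obtain ⟨n, hn⟩ := exists_nat_gt (1 / s)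
    have hn0 : n ≠ 0 := by rintro rfl; simp at hn; linarith [one_div_pos.2 hs]
    have hns : 1 ≤ n * s := by rw [div_lt_iff₀ hs] at hn; linarith
    have : u s ^ n ≤ 0 := by
      rw [← map_natCast_mul_eq_pow hu hn0 hs, h1]
      exact hanti (Set.mem_Ioi.2 one_pos) (Set.mem_Ioi.2 (by linarith)) hns
    rw [← h1, Real.zero_rpow hs.ne',
      pow_eq_zero_iff hn0 |>.1 (le_antisymm this (pow_nonneg (hmem s hs).1 n))]
  · have hpos : ∀ t, 0 < t → 0 < u t := by
      intro t ht
      obtain ⟨n, hn⟩ := exists_nat_ge t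
      have hn0 : n ≠ 0 := by rintro rfl; simp at hn; linarith
      calc 0 < u 1 ^ n := pow_pos h1 n
        _ = u n := (hnat n hn0).symm
        _ ≤ u t := hanti (Set.mem_Ioi.2 ht) (Set.mem_Ioi.2 (ht.trans_le hn)) hn
    have hlog := eq_mul_of_map_add_of_monotoneOn (v := fun t => -Real.log (u t))
      (fun a b ha hb => by
        simp only [hu a b ha hb, Real.log_mul (hpos a ha).ne' (hpos b hb).ne']; ring)
      (fun a ha b hb hab => neg_le_neg (Real.log_le_log (hpos b hb) (hanti ha hb hab))) hs
    rw [Real.rpow_def_of_pos h1, ← Real.exp_log (hpos s hs)]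
    congr 1
    linarith

lemma rpow_eq_of_map_rpow_add_eq_mul {α : ℝ} (hα : α ≠ 0) {u : ℝ → ℝ}
    (hu : ∀ a b, 0 < a → 0 < b → u ((a + b) ^ (1 / α)) = u (a ^ (1 / α)) * u (b ^ (1 / α)))
    (hmem : ∀ s, 0 < s → u s ∈ Set.Icc (0 : ℝ) 1) {s : ℝ} (hs : 0 < s) :
    u s = u 1 ^ (s ^ α) := by
  have := eq_rpow_of_map_add_eq_mul (u := fun a => u (a ^ (1 / α))) hu
    (fun a ha => hmem _ (Real.rpow_pos_of_pos ha _)) (Real.rpow_pos_of_pos hs α)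
  rwa [one_div, Real.rpow_rpow_inv hs.le hα, Real.one_rpow] at this

lemma eq_one_of_tendsto_of_map_two_mul {M : Type*} [TopologicalSpace M] [MonoidWithZero M]
    [IsLeftCancelMulZero M] [ContinuousMul M] [T2Space M] {φ : ℝ → M} {ℓ : M}
    (hφ : ∀ s : ℝ, 0 < s → φ (2 * s) = φ s ^ 2) (hlim : Tendsto φ (𝓝[>] 0) (𝓝 ℓ))
    (hℓ : ℓ ≠ 0) : ℓ = 1 := by
  have htwo : Tendsto (fun s : ℝ => 2 * s) (𝓝[>] 0) (𝓝[>] 0) := by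
    refine tendsto_nhdsWithin_iff.2
      ⟨?_, eventually_mem_nhdsWithin.mono fun s (hs : 0 < s) => by simpa using hs⟩
    simpa using ((continuous_const_mul (2 : ℝ)).tendsto 0).mono_left nhdsWithin_le_nhds
  have hsq : Tendsto (fun s => φ s ^ 2) (𝓝[>] 0) (𝓝 ℓ) :=
    (hlim.comp htwo).congr' (eventually_mem_nhdsWithin.mono fun s hs => hφ s hs)
  have := tendsto_nhds_unique (hlim.pow 2) hsq
  rw [sq] at this
  exact (mul_eq_left₀ hℓ).1 this

lemma norm_integral_le_one {X : Type*} [MeasurableSpace X] {ρ : Measure X}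
    [IsProbabilityMeasure ρ] {f : X → ℂ} (hf : ∀ x, ‖f x‖ ≤ 1) : ‖∫ x, f x ∂ρ‖ ≤ 1 := by
  simpa using norm_integral_le_of_norm_le_const (μ := ρ) (ae_of_all ρ hf)

lemma one_sub_integral_le_mul {X : Type*} [MeasurableSpace X] {ρ : Measure X}
    [IsProbabilityMeasure ρ] {f g : X → ℝ} (hf : Integrable f ρ) (hg : Integrable g ρ) {C : ℝ}
    (h : ∀ x, 1 - f x ≤ C * (1 - g x)) : 1 - ∫ x, f x ∂ρ ≤ C * (1 - ∫ x, g x ∂ρ) := by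
  have := integral_mono (f := fun x => 1 - f x) (g := fun x => C * (1 - g x))
    ((integrable_const 1).sub hf)
    (((integrable_const 1).sub hg).const_mul C) h
  rwa [integral_sub (integrable_const 1) hf, integral_const_mul,
    integral_sub (integrable_const 1) hg, integral_const, probReal_univ, one_smul] at this

lemma ae_eq_integral_of_norm_integral_eq_one {X : Type*} [MeasurableSpace X] {ρ : Measure X}
    [IsProbabilityMeasure ρ] {f : X → ℂ} (hf : ∀ x, ‖f x‖ ≤ 1) (h : ‖∫ x, f x ∂ρ‖ = 1) :
    f =ᵐ[ρ] fun _ => ∫ x, f x ∂ρ := by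
  rcases ae_eq_const_or_norm_integral_lt_of_norm_le_const (ae_of_all ρ hf) with h' | h'
  · rwa [average_eq_integral] at h'
  · simp [h] at h'

lemma integrable_prod_mul_conj {X : Type*} [MeasurableSpace X] {ρ : Measure X} {f : X → ℂ}
    (hf : Integrable f ρ) :
    Integrable (fun p : X × X => f p.1 * starRingEnd ℂ (f p.2)) (ρ.prod ρ) :=
  hf.mul_prod ((Complex.conjCLE : ℂ →L[ℝ] ℂ).integrable_comp hf)

lemma integral_prod_re_mul_conj {X : Type*} [MeasurableSpace X] {ρ : Measure X}
    [IsProbabilityMeasure ρ] {f : X → ℂ} (hf : Integrable f ρ) :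
    ∫ p, (f p.1 * starRingEnd ℂ (f p.2)).re ∂(ρ.prod ρ) = ‖∫ x, f x ∂ρ‖ ^ 2 := by
  have h := integral_re (integrable_prod_mul_conj hf)
  rw [integral_prod_mul f (fun x => starRingEnd ℂ (f x)), integral_conj, Complex.mul_conj,
    Complex.normSq_eq_norm_sq, RCLike.re_to_complex, Complex.ofReal_re] at h
  simpa only [RCLike.re_to_complex] using h

lemma ae_eq_zero_of_forall_integral_eq_one {X : Type*} [Zero X] [MeasurableSpace X]
    {ρ : Measure X} [IsProbabilityMeasure ρ] {C : Set (X → ℂ)} (hC : C.Countable)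
    (hsep : ∀ x : X, x ≠ 0 → ∃ χ ∈ C, χ x ≠ 1) (hle : ∀ χ ∈ C, ∀ x, ‖χ x‖ ≤ 1)
    (h : ∀ χ ∈ C, ∫ x, χ x ∂ρ = 1) : ∀ᵐ x ∂ρ, x = 0 := by
  have hae : ∀ᵐ x ∂ρ, ∀ χ ∈ C, χ x = 1 := (ae_ball_iff hC).2 fun χ hχ => by
    filter_upwards [ae_eq_integral_of_norm_integral_eq_one (hle χ hχ) (by rw [h χ hχ, norm_one])]
      with x hx
    rw [hx, h χ hχ]
  filter_upwards [hae] with x hx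
  by_contra hx0
  obtain ⟨χ, hχ, hχx⟩ := hsep x hx0
  exact hχx (hx χ hχ)

lemma ConditionC.measurable {K : Type*} [TopologicalSpace K] [AddCommMonoid K] [SMul ℝ K]
    [MeasurableSpace K] [OpensMeasurableSpace K] {inv : K → K} {Kt : Set (K → ℂ)}
    (hC : ConditionC inv Kt) {χ : K → ℂ} (hχ : χ ∈ Kt) : Measurable χ := by
  obtain ⟨χ', χ'', hmod, harg, hfac⟩ := hC.2.2.2.2.1 χ hχ
  have hm' : Measurable χ' :=
    hmod.2.2.2.2.elim LowerSemicontinuous.measurable UpperSemicontinuous.measurable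
  rw [funext hfac]
  exact (Complex.measurable_ofReal.comp hm').mul harg.2.2.2.2.measurable

lemma ConditionC.exists_integral_ne_one {K : Type*} [TopologicalSpace K] [AddCommMonoid K]
    [SMul ℝ K] [MeasurableSpace K] [MeasurableSingletonClass K] {inv : K → K}
    {Kt : Set (K → ℂ)} (hC : ConditionC inv Kt) {ν : Measure K} [IsProbabilityMeasure ν]
    (hν : ν {0} < 1) : ∃ χ ∈ Kt, ∫ x, χ x ∂ν ≠ 1 := by
  by_contra! h
  obtain ⟨C, hCKt, hCcount, hCsep⟩ := hC.2.2.2.2.2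
  have hsep : ∀ x : K, x ≠ 0 → ∃ χ ∈ C, χ x ≠ 1 := fun x hx => by
    obtain ⟨χ, hχ, U, hU, V, hV, hUV⟩ := hCsep x 0 hx
    exact ⟨χ, hχ, (hC.1 χ (hCKt hχ)).2.1 ▸ hUV x (mem_of_mem_nhds hU) 0 (mem_of_mem_nhds hV)⟩
  have h0 := ae_eq_zero_of_forall_integral_eq_one hCcount hsep
    (fun χ hχ => (hC.1 χ (hCKt hχ)).1) fun χ hχ => h χ (hCKt hχ)
  exact hν.ne ((prob_compl_eq_zero_iff (measurableSet_singleton 0)).1 (ae_iff.1 h0))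

lemma integral_comp_smul_eq_mul_of_map_eq {K : Type*} [TopologicalSpace K] [AddCommMonoid K]
    [SMul ℝ K] [MeasurableSpace K] [BorelSpace K] [SecondCountableTopology K]
    (hadd : Continuous fun p : K × K => p.1 + p.2) {c d e : ℝ}
    (hc : Continuous fun x : K => c • x) (hd : Continuous fun x : K => d • x)
    (he : Continuous fun x : K => e • x) {ν : Measure K} [SFinite ν]
    (hmap : Measure.map (fun p : K × K => c • p.1 + d • p.2) (ν.prod ν) =
      Measure.map (fun x => e • x) ν)
    {χ : K → ℂ} (hχm : Measurable χ) (hχ : ∀ x y, χ (x + y) = χ x * χ y) :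
    ∫ x, χ (e • x) ∂ν = (∫ x, χ (c • x) ∂ν) * ∫ x, χ (d • x) ∂ν := by
  have hT : Measurable fun p : K × K => c • p.1 + d • p.2 :=
    (hadd.comp ((hc.comp continuous_fst).prodMk (hd.comp continuous_snd))).measurable
  have := congrArg (fun m : Measure K => ∫ x, χ x ∂m) hmap
  rw [integral_map hT.aemeasurable hχm.aestronglyMeasurable,
    integral_map he.measurable.aemeasurable hχm.aestronglyMeasurable] at this
  simp only [hχ] at this
  rw [← this, integral_prod_mul (fun x => χ (c • x)) (fun x => χ (d • x))]

section ConeCharacters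

variable {K : Type*} [AddCommMonoid K] [SMul ℝ K]

lemma map_eq_pow_inv_natCast_smul {M : Type*} [Monoid M]
    (hdistrib : ∀ a b : ℝ, 0 < a → 0 < b → ∀ x : K, (a + b) • x = a • x + b • x)
    (hone : ∀ x : K, (1 : ℝ) • x = x) {φ : K → M} (hφ : ∀ x y, φ (x + y) = φ x * φ y)
    {n : ℕ} (hn : n ≠ 0) (x : K) : φ x = φ ((n : ℝ)⁻¹ • x) ^ n := by
  have hn' : (0 : ℝ) < n := Nat.cast_pos.2 (Nat.pos_of_ne_zero hn)
  have := map_natCast_mul_eq_pow (u := fun s : ℝ => φ (s • x))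
    (fun s t hs ht => by simp only [hdistrib s t hs ht, hφ]) hn (inv_pos.2 hn')
  rwa [mul_inv_cancel₀ hn'.ne', hone] at this

variable [TopologicalSpace K] {inv : K → K}

lemma IsArgChar.tendsto_smul_nhdsWithin_zero {χ'' : K → ℂ} (harg : IsArgChar inv χ'')
    (hdistrib : ∀ a b : ℝ, 0 < a → 0 < b → ∀ x : K, (a + b) • x = a • x + b • x)
    {o x : K} (ho : Tendsto (fun s : ℝ => s • x) (𝓝[>] 0) (𝓝 o)) :
    Tendsto (fun s : ℝ => χ'' (s • x)) (𝓝[>] 0) (𝓝 1) := by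
  have hlim := (harg.2.2.2.2.tendsto o).comp ho
  rwa [eq_one_of_tendsto_of_map_two_mul (φ := fun s => χ'' (s • x))
    (fun s hs => by simp only [two_mul, hdistrib s s hs hs, harg.2.2.1, sq]) hlim
    (norm_ne_zero_iff.1 (by rw [harg.1]; exact one_ne_zero))] at hlim

lemma tendsto_smul_nhdsWithin_zero_indicator {χ : K → ℂ} {χ' : K → ℝ} {χ'' : K → ℂ}
    (hmod : IsModChar inv χ') (harg : IsArgChar inv χ'') (hfac : ∀ x, χ x = χ' x * χ'' x)
    (hdistrib : ∀ a b : ℝ, 0 < a → 0 < b → ∀ x : K, (a + b) • x = a • x + b • x)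
    (hone : ∀ x : K, (1 : ℝ) • x = x) (hsmul_zero : ∀ a : ℝ, 0 < a → a • (0 : K) = 0) {o : K}
    (ho : ∀ x : K, x ≠ 0 → Tendsto (fun s : ℝ => s • x) (𝓝[>] 0) (𝓝 o)) (x : K) :
    Tendsto (fun s : ℝ => χ (s • x)) (𝓝[>] 0) (𝓝 ({y | χ y ≠ 0}.indicator 1 x)) := by
  have hχ0 : χ 0 = 1 := by rw [hfac, hmod.2.1, harg.2.1, Complex.ofReal_one, one_mul]
  rcases eq_or_ne x 0 with rfl | hx
  · rw [Set.indicator_of_mem (by simp [hχ0]), Pi.one_apply]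
    exact tendsto_const_nhds.congr' (eventually_mem_nhdsWithin.mono fun s hs => by
      dsimp only; rw [hsmul_zero s hs, hχ0])
  have hmodpow : ∀ s : ℝ, 0 < s → χ' (s • x) = χ' x ^ s := fun s hs => by
    simpa only [hone] using eq_rpow_of_map_add_eq_mul (u := fun s => χ' (s • x))
      (fun s t hs ht => by simp only [hdistrib s t hs ht, hmod.2.2.1]) (fun s _ => hmod.1 _) hs
  have hsplit : ∀ᶠ s in 𝓝[>] (0 : ℝ), ((χ' x ^ s : ℝ) : ℂ) * χ'' (s • x) = χ (s • x) :=
    eventually_mem_nhdsWithin.mono fun s hs => by rw [hfac, hmodpow s hs]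
  have harg_ne : χ'' x ≠ 0 := norm_ne_zero_iff.1 (by rw [harg.1]; exact one_ne_zero)
  rcases (hmod.1 x).1.eq_or_lt with h0 | hpos
  · have hχx : χ x = 0 := by rw [hfac, ← h0, Complex.ofReal_zero, zero_mul]
    rw [Set.indicator_of_notMem (by simp [hχx])]
    refine tendsto_const_nhds.congr' (hsplit.mp (eventually_mem_nhdsWithin.mono fun s hs h => ?_))
    dsimp only
    rw [← h, ← h0, Real.zero_rpow (ne_of_gt hs), Complex.ofReal_zero, zero_mul]
  · have hχx : χ x ≠ 0 := by
      rw [hfac]; exact mul_ne_zero (Complex.ofReal_ne_zero.2 hpos.ne') harg_ne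
    rw [Set.indicator_of_mem hχx, Pi.one_apply]
    have hmod_lim : Tendsto (fun s : ℝ => ((χ' x ^ s : ℝ) : ℂ)) (𝓝[>] 0) (𝓝 1) := by
      have := (Real.continuousAt_const_rpow hpos.ne' (b := 0)).tendsto.mono_left
        (nhdsWithin_le_nhds (s := Set.Ioi 0))
      rw [Real.rpow_zero] at this
      have := (Complex.continuous_ofReal.tendsto 1).comp this
      rwa [Complex.ofReal_one] at this
    simpa using (hmod_lim.mul (harg.tendsto_smul_nhdsWithin_zero hdistrib (ho x hx))).congr' hsplit

end ConeCharacters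

structure IsProperStableChar {K : Type*} [AddCommMonoid K] [SMul ℝ K] [MeasurableSpace K]
    (ν : Measure K) (α : ℝ) (χ : K → ℂ) : Prop where
  measurable : Measurable χ
  norm_le_one : ∀ x, ‖χ x‖ ≤ 1
  map_add_eq_mul : ∀ x y, χ (x + y) = χ x * χ y
  integral_rpow_smul_add : ∀ a b : ℝ, 0 < a → 0 < b →
    ∫ x, χ ((a + b) ^ (1 / α) • x) ∂ν =
      (∫ x, χ (a ^ (1 / α) • x) ∂ν) * ∫ x, χ (b ^ (1 / α) • x) ∂ν
  integral_ne_zero : ∫ x, χ x ∂ν ≠ 0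

namespace IsProperStableChar

variable {K : Type*} [AddCommMonoid K] [SMul ℝ K] [MeasurableSpace K] {ν : Measure K}
  [IsProbabilityMeasure ν] {α : ℝ} {χ : K → ℂ}

lemma integrable (hχ : IsProperStableChar ν α χ) : Integrable χ ν :=
  .of_bound hχ.measurable.aestronglyMeasurable 1 (ae_of_all _ hχ.norm_le_one)

lemma integrable_comp_smul (hχ : IsProperStableChar ν α χ)
    (hsmul : ∀ a : ℝ, 0 < a → Measurable fun x : K => a • x) {s : ℝ} (hs : 0 < s) :
    Integrable (fun x => χ (s • x)) ν :=
  .of_bound (hχ.measurable.comp (hsmul s hs)).aestronglyMeasurable 1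
    (ae_of_all _ fun _ => hχ.norm_le_one _)

lemma norm_integral_eq_one_of_two_lt (hχ : IsProperStableChar ν α χ)
    (hdistrib : ∀ a b : ℝ, 0 < a → 0 < b → ∀ x : K, (a + b) • x = a • x + b • x)
    (hone : ∀ x : K, (1 : ℝ) • x = x) (hsmul : ∀ a : ℝ, 0 < a → Measurable fun x : K => a • x)
    (hα : 2 < α) : ‖∫ x, χ x ∂ν‖ = 1 := by
  set c := ‖∫ x, χ x ∂ν‖ ^ 2
  have hscale : ∀ s : ℝ, 0 < s → ‖∫ x, χ (s • x) ∂ν‖ ^ 2 = c ^ (s ^ α) := fun s hs => by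
    simpa only [hone] using
      rpow_eq_of_map_rpow_add_eq_mul (u := fun s => ‖∫ x, χ (s • x) ∂ν‖ ^ 2) (by linarith)
      (fun a b ha hb => by simp only [hχ.integral_rpow_smul_add a b ha hb, norm_mul, mul_pow])
      (fun s _ => ⟨by positivity, pow_le_one₀ (norm_nonneg _)
        (norm_integral_le_one fun _ => hχ.norm_le_one _)⟩) hs
  have hc : 0 < c := pow_pos (norm_pos_iff.2 hχ.integral_ne_zero) 2
  have hbound : ∀ n : ℕ, 0 < n → 1 - c ≤ (n : ℝ) ^ 2 * (1 - c ^ ((n : ℝ) ^ (-α))) := by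
    intro n hn
    have hn' : (0 : ℝ) < (n : ℝ)⁻¹ := by positivity
    have hpt : ∀ p : K × K, 1 - (χ p.1 * starRingEnd ℂ (χ p.2)).re ≤ (n : ℝ) ^ 2 *
        (1 - (χ ((n : ℝ)⁻¹ • p.1) * starRingEnd ℂ (χ ((n : ℝ)⁻¹ • p.2))).re) := fun p => by
      rw [map_eq_pow_inv_natCast_smul hdistrib hone hχ.map_add_eq_mul hn.ne' p.1,
        map_eq_pow_inv_natCast_smul hdistrib hone hχ.map_add_eq_mul hn.ne' p.2, map_pow,
        ← mul_pow]
      refine Complex.one_sub_re_pow_le ?_ n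
      rw [norm_mul, Complex.norm_conj]
      exact mul_le_one₀ (hχ.norm_le_one _) (norm_nonneg _) (hχ.norm_le_one _)
    have := one_sub_integral_le_mul (integrable_prod_mul_conj hχ.integrable).re
      (integrable_prod_mul_conj (hχ.integrable_comp_smul hsmul hn')).re hpt
    simp only [RCLike.re_to_complex] at this
    rwa [integral_prod_re_mul_conj hχ.integrable,
      integral_prod_re_mul_conj (hχ.integrable_comp_smul hsmul hn'), hscale _ hn',
      Real.inv_rpow (Nat.cast_nonneg n), ← Real.rpow_neg (Nat.cast_nonneg n)] at this
  have hc1 : 1 ≤ c := one_le_of_one_sub_le_pow_mul_one_sub_rpow hc (by exact_mod_cast hα) hbound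
  have hc1' : c ≤ 1 :=
    pow_le_one₀ (norm_nonneg _) (norm_integral_le_one fun _ => hχ.norm_le_one _)
  exact (pow_eq_one_iff_of_nonneg (norm_nonneg _) two_ne_zero).1 (le_antisymm hc1' hc1)

lemma integral_eq_one_of_norm_integral_smul_eq_one (hχ : IsProperStableChar ν α χ)
    (hdistrib : ∀ a b : ℝ, 0 < a → 0 < b → ∀ x : K, (a + b) • x = a • x + b • x)
    (hone : ∀ x : K, (1 : ℝ) • x = x) (hα : 1 < α)
    (hnorm : ∀ s : ℝ, 0 < s → ‖∫ x, χ (s • x) ∂ν‖ = 1) : ∫ x, χ x ∂ν = 1 := by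
  set F : ℝ → ℂ := fun s => ∫ x, χ (s • x) ∂ν
  have hconst : ∀ s : ℝ, 0 < s → (fun x => χ (s • x)) =ᵐ[ν] fun _ => F s := fun s hs =>
    ae_eq_integral_of_norm_integral_eq_one (fun _ => hχ.norm_le_one _) (hnorm s hs)
  have hadd : ∀ s t : ℝ, 0 < s → 0 < t → F (s + t) = F s * F t := fun s t hs ht =>
    calc F (s + t) = ∫ x, χ (s • x) * χ (t • x) ∂ν := by
          simp only [F, hdistrib s t hs ht, hχ.map_add_eq_mul]
      _ = ∫ x, F s * χ (t • x) ∂ν := integral_congr_ae ((hconst s hs).mul EventuallyEq.rfl)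
      _ = F s * F t := integral_const_mul _ _
  -- With `r = 2 ^ (1 / α) < 2` and `t = (2 - r)⁻¹`, stability gives `F (r t) = F t ^ 2`,
  -- while `F t ^ 2 = F (2 t) = F (r t + 1) = F (r t) * F 1`.
  set r : ℝ := 2 ^ (1 / α)
  have hr : r < 2 := by
    have := Real.rpow_lt_rpow_of_exponent_lt one_lt_two ((div_lt_one (by linarith)).2 hα)
    rwa [Real.rpow_one] at this
  set t := (2 - r)⁻¹
  have ht : 0 < t := inv_pos.2 (sub_pos.2 hr)
  have hrt : 0 < r * t := by positivity
  have hstable : F (r * t) = F (t + t) := by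
    have := hχ.integral_rpow_smul_add (t ^ α) (t ^ α) (by positivity) (by positivity)
    rw [← two_mul, Real.mul_rpow zero_le_two (by positivity), one_div,
      Real.rpow_rpow_inv ht.le (by linarith), ← one_div] at this
    rw [hadd t t ht ht]
    exact this
  have hsplit : F (t + t) = F (r * t) * F 1 := by
    rw [← hadd _ _ hrt one_pos]
    have : (2 - r) * t = 1 := mul_inv_cancel₀ (sub_pos.2 hr).ne'
    congr 1
    linarith
  have hne : F (r * t) ≠ 0 :=
    norm_ne_zero_iff.1 (by simp only [F]; rw [hnorm _ hrt]; exact one_ne_zero)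
  have hF1 : F 1 = 1 := (mul_eq_left₀ hne).1 (hstable.trans hsplit).symm
  simpa [F, hone] using hF1

lemma integral_eq_one_of_one_lt_of_conj_eq (hχ : IsProperStableChar ν α χ)
    (hdistrib : ∀ a b : ℝ, 0 < a → 0 < b → ∀ x : K, (a + b) • x = a • x + b • x)
    (hone : ∀ x : K, (1 : ℝ) • x = x) (hsmul : ∀ a : ℝ, 0 < a → Measurable fun x : K => a • x)
    (hreal : ∀ x, starRingEnd ℂ (χ x) = χ x) (hα : 1 < α) : ∫ x, χ x ∂ν = 1 := by
  set r : K → ℝ := fun x => (χ x).re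
  have hχr : ∀ x, χ x = r x := fun x => (Complex.conj_eq_iff_re.1 (hreal x)).symm
  have hr_mul : ∀ x y, r (x + y) = r x * r y := fun x y => by
    have := hχ.map_add_eq_mul x y
    rw [hχr, hχr x, hχr y] at this
    exact_mod_cast this
  have hr_nonneg : ∀ x, 0 ≤ r x := fun x => by
    rw [map_eq_pow_inv_natCast_smul hdistrib hone hr_mul two_ne_zero x]
    positivity
  have hr_le : ∀ x, r x ≤ 1 := fun x => (Complex.re_le_norm _).trans (hχ.norm_le_one x)
  have hint : ∀ s : ℝ, 0 < s → Integrable (fun x => r (s • x)) ν := fun s hs =>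
    (hχ.integrable_comp_smul hsmul hs).re
  have hχint : ∀ s : ℝ, ∫ x, χ (s • x) ∂ν = ((∫ x, r (s • x) ∂ν : ℝ) : ℂ) := fun s => by
    simp only [hχr, integral_complex_ofReal]
  set c := ∫ x, r x ∂ν
  have hscale : ∀ s : ℝ, 0 < s → ∫ x, r (s • x) ∂ν = c ^ (s ^ α) := fun s hs => by
    simpa only [hone] using rpow_eq_of_map_rpow_add_eq_mul (u := fun s => ∫ x, r (s • x) ∂ν)
      (by linarith) (fun a b ha hb => by
        have := hχ.integral_rpow_smul_add a b ha hb
        rw [hχint, hχint, hχint] at this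
        exact_mod_cast this)
      (fun s hs => ⟨integral_nonneg fun _ => hr_nonneg _, by
        simpa using integral_mono (hint s hs) (integrable_const 1) fun _ => hr_le _⟩) hs
  have hχc : ∫ x, χ x ∂ν = c := by simpa only [hone] using hχint 1
  have hc : 0 < c := (integral_nonneg hr_nonneg).lt_of_ne' fun h =>
    hχ.integral_ne_zero (by rw [hχc]; exact_mod_cast h)
  have hbound : ∀ n : ℕ, 0 < n → 1 - c ≤ (n : ℝ) ^ 1 * (1 - c ^ ((n : ℝ) ^ (-α))) := by
    intro n hn
    have hn' : (0 : ℝ) < (n : ℝ)⁻¹ := by positivity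
    have hpt : ∀ x, 1 - r x ≤ (n : ℝ) ^ 1 * (1 - r ((n : ℝ)⁻¹ • x)) := fun x => by
      have := one_add_mul_le_pow (a := r ((n : ℝ)⁻¹ • x) - 1)
        (by linarith [hr_nonneg ((n : ℝ)⁻¹ • x)]) n
      rw [add_sub_cancel, ← map_eq_pow_inv_natCast_smul hdistrib hone hr_mul hn.ne' x] at this
      linarith
    have := one_sub_integral_le_mul hχ.integrable.re (hint _ hn') hpt
    rwa [hscale _ hn', Real.inv_rpow (Nat.cast_nonneg n),
      ← Real.rpow_neg (Nat.cast_nonneg n)] at this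
  have hc1 : 1 ≤ c := one_le_of_one_sub_le_pow_mul_one_sub_rpow hc (by exact_mod_cast hα) hbound
  have hc1' : c ≤ 1 := by
    simpa using integral_mono hχ.integrable.re (integrable_const 1) fun _ => hr_le _
  rw [hχc, le_antisymm hc1' hc1, Complex.ofReal_one]

lemma integral_eq_one_of_neg (hχ : IsProperStableChar ν α χ) (hone : ∀ x : K, (1 : ℝ) • x = x)
    (hsmul : ∀ a : ℝ, 0 < a → Measurable fun x : K => a • x) (hα : α < 0)
    (hlim : ∀ x, Tendsto (fun s : ℝ => χ (s • x)) (𝓝[>] 0) (𝓝 ({y | χ y ≠ 0}.indicator 1 x))) :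
    ∫ x, χ x ∂ν = 1 := by
  set G : ℝ → ℂ := fun a => ∫ x, χ (a ^ (1 / α) • x) ∂ν
  set q : ℂ := ∫ x, {y | χ y ≠ 0}.indicator 1 x ∂ν
  have hs : Tendsto (fun a : ℝ => a ^ (1 / α)) atTop (𝓝[>] 0) := by
    refine tendsto_nhdsWithin_iff.2 ⟨?_, (eventually_gt_atTop 0).mono fun a ha =>
      Real.rpow_pos_of_pos ha _⟩
    simpa using tendsto_rpow_neg_atTop (y := -(1 / α)) (by simp [hα])
  have hG : Tendsto G atTop (𝓝 q) :=
    tendsto_integral_filter_of_dominated_convergence (fun _ => 1)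
      ((eventually_gt_atTop 0).mono fun a ha =>
        (hχ.integrable_comp_smul hsmul (Real.rpow_pos_of_pos ha _)).aestronglyMeasurable)
      (Eventually.of_forall fun _ => ae_of_all _ fun _ => hχ.norm_le_one _)
      (integrable_const 1) (ae_of_all _ fun x => (hlim x).comp hs)
  have hq : q ≠ 0 := by
    have hset : MeasurableSet {y | χ y ≠ 0} :=
      (hχ.measurable (measurableSet_singleton 0)).compl
    intro h
    have : ν {y | χ y ≠ 0} = 0 := by
      have h' : ν.real {y | χ y ≠ 0} = 0 := by
        simpa [q, Pi.one_def, integral_indicator_const _ hset] using h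
      exact (measureReal_eq_zero_iff).1 h'
    exact hχ.integral_ne_zero (integral_eq_zero_of_ae (ae_iff.2 (by simpa using this)))
  have hG1 : G 1 * q = q := by
    refine tendsto_nhds_unique ((tendsto_const_nhds.mul hG).congr'
      ((eventually_gt_atTop 0).mono fun a ha => ?_))
      (hG.comp (tendsto_atTop_add_const_left _ 1 tendsto_id))
    exact (hχ.integral_rpow_smul_add 1 a one_pos ha).symm
  simpa [G, hone] using (mul_eq_right₀ hq).1 hG1

end IsProperStableChar

lemma ConditionC.isProperStableChar {K : Type*} [TopologicalSpace K] [AddCommMonoid K]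
    [SMul ℝ K] [MeasurableSpace K] [BorelSpace K] [SecondCountableTopology K] {inv : K → K}
    {Kt : Set (K → ℂ)} (hC : ConditionC inv Kt) (hadd : Continuous fun p : K × K => p.1 + p.2)
    (hsmul : ∀ a : ℝ, 0 < a → Continuous fun x : K => a • x) {ν : Measure K} [SFinite ν]
    {α : ℝ} (hstable : ∀ a b : ℝ, 0 < a → 0 < b →
      Measure.map (fun p : K × K => (a ^ (1 / α)) • p.1 + (b ^ (1 / α)) • p.2) (ν.prod ν) =
        Measure.map (fun x : K => ((a + b) ^ (1 / α)) • x) ν)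
    {χ : K → ℂ} (hχ : χ ∈ Kt) (hproper : ∫ x, χ x ∂ν ≠ 0) : IsProperStableChar ν α χ where
  measurable := hC.measurable hχ
  norm_le_one := (hC.1 χ hχ).1
  map_add_eq_mul := (hC.1 χ hχ).2.2.1
  integral_rpow_smul_add a b ha hb :=
    integral_comp_smul_eq_mul_of_map_eq hadd (hsmul _ (by positivity)) (hsmul _ (by positivity))
      (hsmul _ (by positivity)) (hstable a b ha hb) (hC.measurable hχ) (hC.1 χ hχ).2.2.1
  integral_ne_zero := hproper

theorem SaS_exponent_bounds_of_second_distributivity_general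
    {K : Type*} [MetricSpace K] [PolishSpace K] [AddCommMonoid K] [SMul ℝ K]
    [MeasurableSpace K] [BorelSpace K]
    (hadd_cont : Continuous fun p : K × K => p.1 + p.2)
    (hsmul_cont : ContinuousOn (fun p : ℝ × K => p.1 • p.2)
      (Set.Ioi (0 : ℝ) ×ˢ (Set.univ : Set K)))
    (hone_smul : ∀ x : K, (1 : ℝ) • x = x)
    (hsmul_e : ∀ a : ℝ, 0 < a → a • (0 : K) = (0 : K))
    (inv : K → K)
    (hdistrib2 : ∀ a b : ℝ, 0 < a → 0 < b → ∀ x : K, (a + b) • x = a • x + b • x)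
    (Kt : Set (K → ℂ)) (hC : ConditionC inv Kt)
    {Ω : Type*} [MeasurableSpace Ω] (μ : Measure Ω) [IsProbabilityMeasure μ]
    (ξ : Ω → K) (hξmeas : Measurable ξ)
    (hnontriv : μ {ω | ξ ω = (0 : K)} < 1)
    (hproper : ∀ χ ∈ Kt, ∫ ω, χ (ξ ω) ∂μ ≠ 0)
    (α : ℝ) (hα : α ≠ 0)
    (hSaS : ∀ a b : ℝ, 0 < a → 0 < b →
      Measure.map (fun p : K × K => (a ^ (1 / α)) • p.1 + (b ^ (1 / α)) • p.2)
          ((μ.map ξ).prod (μ.map ξ)) =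
        Measure.map (fun x : K => ((a + b) ^ (1 / α)) • x) (μ.map ξ)) :
    α ≤ 2 ∧
    ((∀ x : K, inv x = x) → α ≤ 1) ∧
    (∀ o : K, (∀ x : K, x ≠ 0 →
        Filter.Tendsto (fun a : ℝ => a • x) (nhdsWithin 0 (Set.Ioi 0)) (nhds o)) →
      ConditionE o Kt → 0 < α) := by
  have : IsProbabilityMeasure (μ.map ξ) := Measure.isProbabilityMeasure_map hξmeas.aemeasurable
  have hsmul : ∀ a : ℝ, 0 < a → Continuous fun x : K => a • x := fun a ha =>
    hsmul_cont.comp_continuous (continuous_const.prodMk continuous_id) fun _ => ⟨ha, trivial⟩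
  have hsmulm : ∀ a : ℝ, 0 < a → Measurable fun x : K => a • x := fun a ha =>
    (hsmul a ha).measurable
  have hKt : ∀ χ ∈ Kt, IsProperStableChar (μ.map ξ) α χ := fun χ hχ =>
    hC.isProperStableChar hadd_cont hsmul hSaS hχ <| by
      rw [integral_map hξmeas.aemeasurable (hC.measurable hχ).aestronglyMeasurable]
      exact hproper χ hχ
  obtain ⟨χ, hχKt, hχ1⟩ := hC.exists_integral_ne_one (ν := μ.map ξ)
    (by rwa [Measure.map_apply hξmeas (measurableSet_singleton 0)])
  refine ⟨?_, fun hinv => ?_, fun o ho _ => ?_⟩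
  · by_contra! hα2
    refine hχ1 ((hKt χ hχKt).integral_eq_one_of_norm_integral_smul_eq_one hdistrib2 hone_smul
      (by linarith) fun s hs => ?_)
    exact (hKt _ (hC.2.2.2.1 s hs χ hχKt)).norm_integral_eq_one_of_two_lt hdistrib2 hone_smul
      hsmulm hα2
  · by_contra! hα1
    exact hχ1 ((hKt χ hχKt).integral_eq_one_of_one_lt_of_conj_eq hdistrib2 hone_smul hsmulm
      (fun x => by rw [← (hC.1 χ hχKt).2.2.2 x, hinv]) hα1)
  · by_contra! hα0
    obtain ⟨χ', χ'', hmod, harg, hfac⟩ := hC.2.2.2.2.1 χ hχKt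
    exact hχ1 ((hKt χ hχKt).integral_eq_one_of_neg hone_smul hsmulm (hα0.lt_of_ne hα)
      (tendsto_smul_nhdsWithin_zero_indicator hmod harg hfac hdistrib2 hone_smul hsmul_e ho))

/-- Assume Condition (C) and the second distributivity law.  Then
(i) every proper strictly `α`-stable random element in `K` has exponent `α ≤ 2`;
(ii) if the involution is the identity map then `α ≤ 1`; and if in addition `K` is
pointed with origin `o` and Condition (E) holds, then `α > 0`. -/
theorem SaS_exponent_bounds_of_second_distributivity
    {K : Type*} [MetricSpace K] [PolishSpace K] [AddCommMonoid K] [SMul ℝ K]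
    [MeasurableSpace K] [BorelSpace K]
    (hadd_cont : Continuous fun p : K × K => p.1 + p.2)
    (hsmul_cont : ContinuousOn (fun p : ℝ × K => p.1 • p.2)
      (Set.Ioi (0 : ℝ) ×ˢ (Set.univ : Set K)))
    (hsmul_add : ∀ a : ℝ, 0 < a → ∀ x y : K, a • (x + y) = a • x + a • y)
    (hsmul_assoc : ∀ a b : ℝ, 0 < a → 0 < b → ∀ x : K, a • (b • x) = (a * b) • x)
    (hone_smul : ∀ x : K, (1 : ℝ) • x = x)
    (hsmul_e : ∀ a : ℝ, 0 < a → a • (0 : K) = (0 : K))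
    (inv : K → K)
    (hinv_cont : Continuous inv)
    (hinv_add : ∀ x y : K, inv (x + y) = inv x + inv y)
    (hinv_invol : ∀ x : K, inv (inv x) = x)
    (hinv_smul : ∀ a : ℝ, 0 < a → ∀ x : K, inv (a • x) = a • inv x)
    (hdistrib2 : ∀ a b : ℝ, 0 < a → 0 < b → ∀ x : K, (a + b) • x = a • x + b • x)
    (Kt : Set (K → ℂ)) (hC : ConditionC inv Kt)
    {Ω : Type*} [MeasurableSpace Ω] (μ : Measure Ω) [IsProbabilityMeasure μ]
    (ξ : Ω → K) (hξmeas : Measurable ξ)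
    (hnontriv : μ {ω | ξ ω = (0 : K)} < 1)
    (hproper : ∀ χ ∈ Kt, ∫ ω, χ (ξ ω) ∂μ ≠ 0)
    (α : ℝ) (hα : α ≠ 0)
    (hSaS : ∀ a b : ℝ, 0 < a → 0 < b →
      Measure.map (fun p : K × K => (a ^ (1 / α)) • p.1 + (b ^ (1 / α)) • p.2)
          ((μ.map ξ).prod (μ.map ξ)) =
        Measure.map (fun x : K => ((a + b) ^ (1 / α)) • x) (μ.map ξ)) :
    α ≤ 2 ∧
    ((∀ x : K, inv x = x) → α ≤ 1) ∧
    (∀ o : K, (∀ x : K, x ≠ 0 →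
        Filter.Tendsto (fun a : ℝ => a • x) (nhdsWithin 0 (Set.Ioi 0)) (nhds o)) →
      ConditionE o Kt → 0 < α) :=
  SaS_exponent_bounds_of_second_distributivity_general hadd_cont hsmul_cont hone_smul hsmul_e inv
    hdistrib2 Kt hC μ ξ hξmeas hnontriv hproper α hα hSaS
end

section
/- Let K be a normed cone such that ‖x+y‖ ≥ ‖x‖ for all x,y∈K. Then every SαS random element ξ with ξ∈E almost surely (i.e. 0 < ‖ξ‖ < ∞ almost surely) has characteristic exponent α > 0. -/
/-!
If `α < 0` then `r = 2 ^ (1 / α) < 1`, and stability says `ξ₁ + ξ₂` has the law of `r • ξ`.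
As the norm only grows under addition, `P(‖ξ‖ > t) ≤ P(‖ξ₁ + ξ₂‖ > t) = P(‖ξ‖ > t / r)`.
Iterating pushes the threshold to `∞`, so `P(‖ξ‖ > t) ≤ P(‖ξ‖ = ∞) = 0` for every `t > 0`,
i.e. `ξ = 0` almost surely, contradicting `ξ ∈ E`.
-/

open Filter Topology MeasureTheory Set
open scoped ENNReal

section Tail

variable {X : Type*} [MeasurableSpace X] {ν : Measure X} [IsFiniteMeasure ν] {N : X → ℝ≥0∞}
  {d : ℝ≥0∞}

theorem measure_lt_eq_zero_of_le_measure_mul_lt (hN : Measurable N) (hfin : ∀ᵐ x ∂ν, N x ≠ ∞)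
    (hd : 1 < d) (hle : ∀ t, ν {x | t < N x} ≤ ν {x | t * d < N x}) {t : ℝ≥0∞} (ht : t ≠ 0) :
    ν {x | t < N x} = 0 := by
  have hiter : ∀ n : ℕ, ν {x | t < N x} ≤ ν {x | t * d ^ n < N x} := by
    intro n
    induction n with
    | zero => simp
    | succ n ih => simpa only [pow_succ, mul_assoc] using ih.trans (hle _)
  have hanti : Antitone fun n : ℕ => {x | t * d ^ n < N x} := fun m n hmn x hx =>
    lt_of_le_of_lt (mul_le_mul_right (pow_le_pow_right₀ hd.le hmn) t) hx
  have hinter : ν (⋂ n, {x | t * d ^ n < N x}) = 0 := by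
    refine measure_mono_null (fun x hx => ?_) (ae_iff.1 hfin)
    show ¬N x ≠ ∞
    intro hxfin
    have hgrow : Tendsto (fun n : ℕ => t * d ^ n) atTop (𝓝 ∞) := by
      simpa only [ENNReal.mul_top ht] using ENNReal.Tendsto.const_mul (a := t)
        (ENNReal.tendsto_pow_atTop_nhds_top_iff.2 hd) (Or.inl ENNReal.top_ne_zero)
    obtain ⟨n, hn⟩ := (hgrow.eventually (lt_mem_nhds (lt_top_iff_ne_top.2 hxfin))).exists
    exact lt_asymm (mem_iInter.1 hx n) hn
  have hlim : Tendsto (fun n => ν {x | t * d ^ n < N x}) atTop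
      (𝓝 (ν (⋂ n, {x | t * d ^ n < N x}))) :=
    tendsto_measure_iInter_atTop (fun _ => (hN measurableSet_Ioi).nullMeasurableSet) hanti
      ⟨0, measure_ne_top ν _⟩
  rw [hinter] at hlim
  exact le_antisymm (ge_of_tendsto' hlim hiter) bot_le

theorem ae_eq_zero_of_le_measure_mul_lt (hN : Measurable N) (hfin : ∀ᵐ x ∂ν, N x ≠ ∞)
    (hd : 1 < d) (hle : ∀ t, ν {x | t < N x} ≤ ν {x | t * d < N x}) :
    ∀ᵐ x ∂ν, N x = 0 := by
  have hcover : {x | ¬N x = 0} ⊆ ⋃ n : ℕ, {x | (n : ℝ≥0∞)⁻¹ < N x} := fun x hx =>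
    mem_iUnion.2 (ENNReal.exists_inv_nat_lt hx)
  exact ae_iff.2 <| measure_mono_null hcover <| measure_iUnion_null fun n =>
    measure_lt_eq_zero_of_le_measure_mul_lt hN hfin hd hle
      (ENNReal.inv_ne_zero.2 (ENNReal.natCast_ne_top n))

end Tail

theorem measure_lt_le_of_map_add_eq_map {K : Type*} [AddCommMonoid K] [MeasurableSpace K]
    [MeasurableAdd₂ K] {ν : Measure K} [IsProbabilityMeasure ν] {N : K → ℝ≥0∞}
    (hN : Measurable N) (hmono : ∀ x y, N x ≤ N (x + y)) {g : K → K} (hg : Measurable g)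
    (hsum : (ν.prod ν).map (fun p => p.1 + p.2) = ν.map g) (t : ℝ≥0∞) :
    ν {x | t < N x} ≤ ν (g ⁻¹' {x | t < N x}) :=
  calc ν {x | t < N x} = (ν.prod ν) ({x | t < N x} ×ˢ univ) := by
        rw [Measure.prod_prod, measure_univ, mul_one]
    _ ≤ (ν.prod ν) ((fun p => p.1 + p.2) ⁻¹' {x | t < N x}) :=
        measure_mono fun p hp => hp.1.trans_le (hmono _ _)
    _ = ν (g ⁻¹' {x | t < N x}) := by
        have hS : MeasurableSet {x | t < N x} := hN measurableSet_Ioi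
        rw [← Measure.map_apply measurable_add hS, hsum, Measure.map_apply hg hS]

theorem continuous_smul_of_continuousOn_Ioi {K : Type*} [TopologicalSpace K] [SMul ℝ K]
    (h : ContinuousOn (fun p : ℝ × K => p.1 • p.2) (Ioi 0 ×ˢ univ)) {a : ℝ} (ha : 0 < a) :
    Continuous fun x : K => a • x :=
  continuous_iff_continuousAt.2 fun x =>
    (h.continuousAt ((isOpen_Ioi.prod isOpen_univ).mem_nhds
      (show (a, x) ∈ Ioi 0 ×ˢ univ from ⟨ha, trivial⟩))).comp
      (Continuous.prodMk_right a).continuousAt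

theorem SaS_exponent_positive_of_norm_increasing_general
    {K : Type*} [EMetricSpace K] [SecondCountableTopology K]
    [AddCommMonoid K] [SMul ℝ K] [MeasurableSpace K] [BorelSpace K]
    (hadd_cont : Continuous fun p : K × K => p.1 + p.2)
    (hsmul_cont : ContinuousOn (fun p : ℝ × K => p.1 • p.2)
      (Set.Ioi (0 : ℝ) ×ˢ (Set.univ : Set K)))
    (hone_smul : ∀ x : K, (1 : ℝ) • x = x)
    (o : K)
    (hhom : ∀ a : ℝ, 0 < a → ∀ x : K, edist (a • x) o = ENNReal.ofReal a * edist x o)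
    (hmono : ∀ x y : K, edist x o ≤ edist (x + y) o)
    {Ω : Type*} [MeasurableSpace Ω] (μ : Measure Ω) [IsProbabilityMeasure μ]
    (ξ : Ω → K) (hξmeas : Measurable ξ)
    (hξE : ∀ᵐ ω ∂μ, 0 < edist (ξ ω) o ∧ edist (ξ ω) o < ⊤)
    (α : ℝ) (hα : α ≠ 0)
    (hSaS : ∀ a b : ℝ, 0 < a → 0 < b →
      Measure.map (fun p : K × K => (a ^ (1 / α)) • p.1 + (b ^ (1 / α)) • p.2)
          ((μ.map ξ).prod (μ.map ξ)) =
        Measure.map (fun x : K => ((a + b) ^ (1 / α)) • x) (μ.map ξ)) :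
    0 < α := by
  by_contra hpos
  have hα_neg : α < 0 := lt_of_le_of_ne (not_lt.1 hpos) hα
  set r : ℝ := (2 : ℝ) ^ (1 / α)
  have hr0 : 0 < r := by positivity
  have hr1 : ENNReal.ofReal r < 1 := ENNReal.ofReal_lt_one.2 <|
    Real.rpow_lt_one_of_one_lt_of_neg one_lt_two (one_div_neg.2 hα_neg)
  set ν := μ.map ξ
  have : IsProbabilityMeasure ν := Measure.isProbabilityMeasure_map hξmeas.aemeasurable
  have : MeasurableAdd₂ K := ⟨hadd_cont.measurable⟩
  have hN : Measurable fun x : K => edist x o := (continuous_id.edist continuous_const).measurable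
  have hsum : (ν.prod ν).map (fun p => p.1 + p.2) = ν.map (r • ·) := by
    simpa only [Real.one_rpow, hone_smul, one_add_one_eq_two] using hSaS 1 1 one_pos one_pos
  have htail (t : ℝ≥0∞) :
      ν {x | t < edist x o} ≤ ν {x | t * (ENNReal.ofReal r)⁻¹ < edist x o} := by
    refine (measure_lt_le_of_map_add_eq_map hN hmono
      (continuous_smul_of_continuousOn_Ioi hsmul_cont hr0).measurable hsum t).trans
      (measure_mono fun x hx => ?_)
    change t < edist (r • x) o at hx
    rw [hhom r hr0] at hx
    show t * (ENNReal.ofReal r)⁻¹ < edist x o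
    rwa [← div_eq_mul_inv, ENNReal.div_lt_iff (Or.inl (by positivity))
      (Or.inl ENNReal.ofReal_ne_top), mul_comm]
  have hE : ∀ᵐ x ∂ν, 0 < edist x o ∧ edist x o < ⊤ :=
    (ae_map_iff hξmeas.aemeasurable ((hN measurableSet_Ioi).inter (hN measurableSet_Iio))).2 hξE
  have hzero := ae_eq_zero_of_le_measure_mul_lt hN (hE.mono fun _ hx => hx.2.ne)
    (ENNReal.one_lt_inv.2 hr1) htail
  obtain ⟨x, hx0, hxE⟩ := (hzero.and hE).exists
  exact hxE.1.ne' hx0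

/-- Let `K` be a normed cone (pointed convex cone with extended metric
homogeneous at the origin `o`, norm `‖x‖ = edist x o`) such that `‖x + y‖ ≥ ‖x‖` for
all `x, y ∈ K`.  Then every strictly `α`-stable random element `ξ` with `ξ ∈ E`
almost surely (i.e. `0 < ‖ξ‖ < ∞` a.s.) has characteristic exponent `α > 0`.
Lean's `0 : K` is the neutral element `e`. -/
theorem SaS_exponent_positive_of_norm_increasing
    {K : Type*} [EMetricSpace K] [CompleteSpace K] [SecondCountableTopology K]
    [AddCommMonoid K] [SMul ℝ K] [MeasurableSpace K] [BorelSpace K]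
    (hadd_cont : Continuous fun p : K × K => p.1 + p.2)
    (hsmul_cont : ContinuousOn (fun p : ℝ × K => p.1 • p.2)
      (Set.Ioi (0 : ℝ) ×ˢ (Set.univ : Set K)))
    (hsmul_add : ∀ a : ℝ, 0 < a → ∀ x y : K, a • (x + y) = a • x + a • y)
    (hsmul_assoc : ∀ a b : ℝ, 0 < a → 0 < b → ∀ x : K, a • (b • x) = (a * b) • x)
    (hone_smul : ∀ x : K, (1 : ℝ) • x = x)
    (hsmul_e : ∀ a : ℝ, 0 < a → a • (0 : K) = (0 : K))
    (o : K)
    (horigin : ∀ x : K, x ≠ 0 →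
      Tendsto (fun a : ℝ => a • x) (𝓝[>] (0 : ℝ)) (𝓝 o))
    (hhom : ∀ a : ℝ, 0 < a → ∀ x : K, edist (a • x) o = ENNReal.ofReal a * edist x o)
    (hmono : ∀ x y : K, edist x o ≤ edist (x + y) o)
    {Ω : Type*} [MeasurableSpace Ω] (μ : Measure Ω) [IsProbabilityMeasure μ]
    (ξ : Ω → K) (hξmeas : Measurable ξ)
    (hξE : ∀ᵐ ω ∂μ, 0 < edist (ξ ω) o ∧ edist (ξ ω) o < ⊤)
    (α : ℝ) (hα : α ≠ 0)
    (hSaS : ∀ a b : ℝ, 0 < a → 0 < b →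
      Measure.map (fun p : K × K => (a ^ (1 / α)) • p.1 + (b ^ (1 / α)) • p.2)
          ((μ.map ξ).prod (μ.map ξ)) =
        Measure.map (fun x : K => ((a + b) ^ (1 / α)) • x) (μ.map ξ)) :
    0 < α :=
  SaS_exponent_positive_of_norm_increasing_general hadd_cont hsmul_cont hone_smul o hhom hmono μ ξ
    hξmeas hξE α hα hSaS
end
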